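/- arXiv:2309.07249 — 7 statements merged into one kernel-verified Lean document; each statement's English description precedes it below -/
import Mathlib

section
/- Let (a_n)_{n∈ℕ} be a bounded sequence of complex numbers, let T_N = (1/N) ∑_{n=1}^N a_n, and let t ∈ ℂ. Then lim_{N→∞} T_N = t if and only if there exists a strictly increasing sequence of indices (N_j)_{j∈ℕ} such that N_{j+1}/N_j → 1 and lim_{j→∞} T_{N_j} = t. -/
open Filter Finset

theorem stmt_1 (a : ℕ → ℂ) (C : ℝ) (hbd : ∀ n, ‖a n‖ ≤ C) (t : ℂ)
    (T : ℕ → ℂ) (hT : ∀ N, T N = (N : ℂ)⁻¹ * ∑ n ∈ Finset.Icc 1 N, a n) :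
    Tendsto T atTop (nhds t) ↔
      ∃ Nseq : ℕ → ℕ, StrictMono Nseq ∧
        Tendsto (fun j => (Nseq (j + 1) : ℝ) / (Nseq j : ℝ)) atTop (nhds 1) ∧
        Tendsto (fun j => T (Nseq j)) atTop (nhds t) := by
  constructor
  · intro h
    refine ⟨fun j => j + 1, fun i j hij => by simpa using hij, ?_,
      h.comp (tendsto_add_atTop_nat 1)⟩
    have key : ∀ j : ℕ, ((j + 1 + 1 : ℕ) : ℝ) / ((j + 1 : ℕ) : ℝ)
        = 1 + 1 / ((j : ℝ) + 1) := by
      intro j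
      have : ((j : ℝ) + 1) ≠ 0 := by positivity
      push_cast
      field_simp
    simp only [key]
    simpa using tendsto_const_nhds.add (tendsto_one_div_add_atTop_nhds_zero_nat (𝕜 := ℝ))
  · rintro ⟨Ns, hmono, hrat, hTt⟩
    have hC : 0 ≤ C := le_trans (norm_nonneg _) (hbd 0)
    have hNs : ∀ j, j ≤ Ns j := fun j => hmono.le_apply
    set S : ℕ → ℂ := fun k => ∑ n ∈ Finset.Icc 1 k, a n with hS
    have hSle : ∀ k : ℕ, ‖S k‖ ≤ C * k := by
      intro k
      calc ‖S k‖ ≤ ∑ n ∈ Finset.Icc 1 k, ‖a n‖ := norm_sum_le _ _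
        _ ≤ ∑ _n ∈ Finset.Icc 1 k, C := Finset.sum_le_sum fun n _ => hbd n
        _ = C * k := by
            rw [Finset.sum_const, Nat.card_Icc]
            simp [mul_comm]
    have hdiff : ∀ M N : ℕ, M ≤ N → ‖S N - S M‖ ≤ C * ((N : ℝ) - M) := by
      intro M N hMN
      have hIcc : ∀ k : ℕ, Finset.Icc 1 k = Finset.Ioc 0 k := by
        intro k; rw [← Finset.Icc_add_one_left_eq_Ioc, zero_add]
      have hsplit : S M + ∑ n ∈ Finset.Ioc M N, a n = S N := by
        simp only [hS, hIcc]
        exact Finset.sum_Ioc_consecutive _ (Nat.zero_le M) hMN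
      have : S N - S M = ∑ n ∈ Finset.Ioc M N, a n := by
        rw [← hsplit]; ring
      rw [this]
      calc ‖∑ n ∈ Finset.Ioc M N, a n‖ ≤ ∑ n ∈ Finset.Ioc M N, ‖a n‖ :=
            norm_sum_le _ _
        _ ≤ ∑ _n ∈ Finset.Ioc M N, C := Finset.sum_le_sum fun n _ => hbd n
        _ = C * ((N : ℝ) - M) := by
            rw [Finset.sum_const, Nat.card_Ioc]
            rw [nsmul_eq_mul, Nat.cast_sub hMN]
            ring
    rw [Metric.tendsto_atTop]
    intro ε hε
    set δ : ℝ := ε / (2 * (2 * C + 1)) with hδ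
    have hδpos : 0 < δ := by positivity
    have h1 : ∀ᶠ j in atTop, dist (T (Ns j)) t < ε / 2 :=
      eventually_atTop.mpr (Metric.tendsto_atTop.mp hTt (ε / 2) (by positivity))
    have h2 : ∀ᶠ j in atTop, (Ns (j + 1) : ℝ) / (Ns j : ℝ) < 1 + δ :=
      hrat.eventually_lt_const (by linarith)
    obtain ⟨J₀, hJ₀⟩ := (h1.and h2).exists_forall_of_atTop
    set J : ℕ := max J₀ 1 with hJdef
    refine ⟨Ns J, fun N hN => ?_⟩
    set j : ℕ := Nat.findGreatest (fun k => Ns k ≤ N) N with hjdef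
    have hJN : J ≤ N := le_trans (hNs J) hN
    have hJj : J ≤ j := Nat.le_findGreatest hJN hN
    have hjle : Ns j ≤ N := Nat.findGreatest_spec (P := fun k => Ns k ≤ N) hJN hN
    have hnext : N < Ns (j + 1) := by
      rcases le_or_gt (j + 1) N with hle | hlt
      · by_contra hcon
        exact Nat.findGreatest_is_greatest (Nat.lt_succ_self j) hle (not_lt.mp hcon)
      · have hjN : j ≤ N := Nat.findGreatest_le N
        have : j = N := by omega
        calc N < j + 1 := by omega
          _ ≤ Ns (j + 1) := hNs _
    have hJ1 : 1 ≤ J := le_max_right _ _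
    have hj1 : 1 ≤ j := le_trans hJ1 hJj
    have hJ₀j := hJ₀ j (le_trans (le_max_left J₀ 1) hJj)
    -- real variables
    set m : ℝ := (Ns j : ℝ) with hm
    set n : ℝ := (N : ℝ) with hn
    set m' : ℝ := (Ns (j + 1) : ℝ) with hm'
    have h1m : (1 : ℝ) ≤ m := by
      rw [hm]; exact_mod_cast le_trans hj1 (hNs j)
    have hmn : m ≤ n := by rw [hm, hn]; exact_mod_cast hjle
    have hnm' : n < m' := by rw [hn, hm']; exact_mod_cast hnext
    have hmpos : (0 : ℝ) < m := by linarith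
    have hnpos : (0 : ℝ) < n := by linarith
    have hsplitT : T N - T (Ns j) =
        (N : ℂ)⁻¹ * (S N - S (Ns j)) + ((N : ℂ)⁻¹ - ((Ns j : ℕ) : ℂ)⁻¹) * S (Ns j) := by
      rw [hT, hT]; ring
    have hinv : n⁻¹ ≤ m⁻¹ := inv_anti₀ hmpos hmn
    have hnormcoef : ‖(N : ℂ)⁻¹ - ((Ns j : ℕ) : ℂ)⁻¹‖ = m⁻¹ - n⁻¹ := by
      have hcast : (N : ℂ)⁻¹ - ((Ns j : ℕ) : ℂ)⁻¹ = ((n⁻¹ - m⁻¹ : ℝ) : ℂ) := by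
        rw [hm, hn]; push_cast; ring
      have hle : n⁻¹ - m⁻¹ ≤ 0 := by linarith
      rw [hcast, Complex.norm_real, Real.norm_eq_abs, abs_of_nonpos hle]
      ring
    have e1 : ‖(N : ℂ)⁻¹‖ = n⁻¹ := by
      rw [norm_inv, Complex.norm_natCast]
    have hTbound : ‖T N - T (Ns j)‖ ≤ 2 * C * ((n - m) / n) := by
      rw [hsplitT]
      have b1 : ‖(N : ℂ)⁻¹ * (S N - S (Ns j))‖ ≤ n⁻¹ * (C * (n - m)) := by
        rw [norm_mul, e1]
        exact mul_le_mul_of_nonneg_left (hdiff _ _ hjle) (by positivity)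
      have b2 : ‖((N : ℂ)⁻¹ - ((Ns j : ℕ) : ℂ)⁻¹) * S (Ns j)‖ ≤ (m⁻¹ - n⁻¹) * (C * m) := by
        rw [norm_mul, hnormcoef]
        exact mul_le_mul_of_nonneg_left (hSle _) (by linarith)
      calc ‖(N : ℂ)⁻¹ * (S N - S (Ns j)) + ((N : ℂ)⁻¹ - ((Ns j : ℕ) : ℂ)⁻¹) * S (Ns j)‖
          ≤ ‖(N : ℂ)⁻¹ * (S N - S (Ns j))‖ + ‖((N : ℂ)⁻¹ - ((Ns j : ℕ) : ℂ)⁻¹) * S (Ns j)‖ :=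
            norm_add_le _ _
        _ ≤ n⁻¹ * (C * (n - m)) + (m⁻¹ - n⁻¹) * (C * m) := add_le_add b1 b2
        _ = 2 * C * ((n - m) / n) := by
            field_simp
            ring
    have hratio : (n - m) / n ≤ m' / m - 1 := by
      have ha : (n - m) * m ≤ (n - m) * n := mul_le_mul_of_nonneg_left hmn (by linarith)
      have hb : (n - m) * n ≤ (m' - m) * n := mul_le_mul_of_nonneg_right (by linarith) (by linarith)
      have h12 : (n - m) / n ≤ (m' - m) / m := by
        rw [div_le_div_iff₀ hnpos hmpos]
        linarith
      have h3' : (m' - m) / m = m' / m - 1 := by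
        rw [sub_div, div_self (ne_of_gt hmpos)]
      linarith
    have hr : m' / m < 1 + δ := hJ₀j.2
    have hTbound2 : ‖T N - T (Ns j)‖ ≤ 2 * C * δ := by
      calc ‖T N - T (Ns j)‖ ≤ 2 * C * ((n - m) / n) := hTbound
        _ ≤ 2 * C * (m' / m - 1) := mul_le_mul_of_nonneg_left hratio (by positivity)
        _ ≤ 2 * C * δ := mul_le_mul_of_nonneg_left (by linarith) (by positivity)
    have hsmall : 2 * C * δ < ε / 2 := by
      have heq : 2 * C * δ = 2 * C * ε / (2 * (2 * C + 1)) := by rw [hδ]; ring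
      rw [heq, div_lt_div_iff₀ (by positivity) (by norm_num : (0:ℝ) < 2)]
      nlinarith [mul_nonneg hC hε.le]
    calc dist (T N) t ≤ dist (T N) (T (Ns j)) + dist (T (Ns j)) t := dist_triangle _ _ _
      _ < ε / 2 + ε / 2 := by
          apply add_lt_add_of_lt_of_lt
          · rw [dist_eq_norm]; exact lt_of_le_of_lt hTbound2 hsmall
          · exact hJ₀j.1
      _ = ε := by ring
end

section
/- Let F₁ be a nonempty finite set of Gaussian primes. Then the logarithmically weighted average of N(gcd(n,m)) over pairs (n,m) ∈ F₁ × F₁ is strictly less than 1 + 4/L(F₁), i.e., (1/L(F₁)²) ∑_{n,m∈F₁} N(gcd(n,m))/(N(n)N(m)) < 1 + 4/L(F₁). -/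
open Finset

/-- logarithmic weight of a finite set of Gaussian integers -/
noncomputable def Lweight (F : Finset GaussianInt) : ℝ :=
  ∑ n ∈ F, 1 / (Zsqrtd.norm n : ℝ)

lemma unit_cases (u : GaussianInt) (hu : IsUnit u) :
    u = 1 ∨ u = -1 ∨ u = ⟨0, 1⟩ ∨ u = ⟨0, -1⟩ := by
  have h : u.norm = 1 := (Zsqrtd.norm_eq_one_iff' (by norm_num) u).2 hu
  obtain ⟨a, b⟩ := u
  have h' : a * a + b * b = 1 := by simpa [Zsqrtd.norm] using h
  have h1 : a ≤ 1 := by nlinarith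
  have h2 : -1 ≤ a := by nlinarith
  have h3 : b ≤ 1 := by nlinarith
  have h4 : -1 ≤ b := by nlinarith
  interval_cases a <;> interval_cases b <;>
    simp_all [Zsqrtd.ext_iff]

open scoped Classical in
lemma assoc_card_le (F : Finset GaussianInt) (n : GaussianInt) :
    (F.filter (fun m => Associated n m)).card ≤ 4 := by
  have hsub : F.filter (fun m => Associated n m) ⊆
      ({n, -n, n * ⟨0, 1⟩, n * ⟨0, -1⟩} : Finset GaussianInt) := by
    intro m hm
    obtain ⟨u, hu⟩ := (Finset.mem_filter.1 hm).2
    rcases unit_cases (u : GaussianInt) u.isUnit with h | h | h | h <;>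
      simp [Finset.mem_insert, ← hu, h, mul_comm]
  calc (F.filter (fun m => Associated n m)).card
      ≤ ({n, -n, n * ⟨0, 1⟩, n * ⟨0, -1⟩} : Finset GaussianInt).card :=
        Finset.card_le_card hsub
    _ ≤ 4 := by
        apply le_trans (Finset.card_insert_le _ _)
        apply le_trans (Nat.succ_le_succ (Finset.card_insert_le _ _))
        apply le_trans (Nat.succ_le_succ (Nat.succ_le_succ (Finset.card_insert_le _ _)))
        simp

theorem stmt_2 (F₁ : Finset GaussianInt) (hF : F₁.Nonempty)
    (hprime : ∀ p ∈ F₁, Prime p) :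
    (1 / (Lweight F₁) ^ 2) *
        ∑ n ∈ F₁, ∑ m ∈ F₁,
          (Zsqrtd.norm (EuclideanDomain.gcd n m) : ℝ) /
            ((Zsqrtd.norm n : ℝ) * (Zsqrtd.norm m : ℝ)) <
      1 + 4 / Lweight F₁ := by
  classical
  set L := Lweight F₁ with hLdef
  have hnormpos : ∀ n ∈ F₁, (0 : ℝ) < (Zsqrtd.norm n : ℝ) := by
    intro n hn
    exact_mod_cast GaussianInt.norm_pos.2 (hprime n hn).ne_zero
  have hnorm1 : ∀ n ∈ F₁, (1 : ℝ) ≤ (Zsqrtd.norm n : ℝ) := by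
    intro n hn
    have : (1 : ℤ) ≤ Zsqrtd.norm n := GaussianInt.norm_pos.2 (hprime n hn).ne_zero
    exact_mod_cast this
  have hLpos : 0 < L := by
    rw [hLdef, Lweight]
    apply Finset.sum_pos _ hF
    intro n hn
    exact div_pos one_pos (hnormpos n hn)
  -- per-term value
  have hterm : ∀ n ∈ F₁, ∀ m ∈ F₁,
      (Zsqrtd.norm (EuclideanDomain.gcd n m) : ℝ) /
        ((Zsqrtd.norm n : ℝ) * (Zsqrtd.norm m : ℝ)) =
      1 / ((Zsqrtd.norm n : ℝ) * (Zsqrtd.norm m : ℝ)) +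
        (if Associated n m then
          1 / (Zsqrtd.norm n : ℝ) - 1 / ((Zsqrtd.norm n : ℝ) * (Zsqrtd.norm m : ℝ))
        else 0) := by
    intro n hn m hm
    by_cases h : Associated n m
    · rw [if_pos h]
      have hgcd : Associated (EuclideanDomain.gcd n m) n :=
        associated_of_dvd_dvd (EuclideanDomain.gcd_dvd_left n m)
          (EuclideanDomain.dvd_gcd dvd_rfl h.dvd)
      have hng : Zsqrtd.norm (EuclideanDomain.gcd n m) = Zsqrtd.norm n :=
        Zsqrtd.norm_eq_of_associated (by norm_num) hgcd
      have hnm : Zsqrtd.norm n = Zsqrtd.norm m :=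
        Zsqrtd.norm_eq_of_associated (by norm_num) h
      rw [hng, ← hnm]
      have hp := hnormpos n hn
      field_simp
      ring
    · rw [if_neg h, add_zero]
      obtain ⟨c, hc⟩ := EuclideanDomain.gcd_dvd_left n m
      have hunit : IsUnit (EuclideanDomain.gcd n m) := by
        rcases (hprime n hn).irreducible.isUnit_or_isUnit hc with h1 | h1
        · exact h1
        · exfalso
          have hassoc : Associated (EuclideanDomain.gcd n m) n :=
            ⟨h1.unit, by rw [IsUnit.unit_spec, ← hc]⟩
          have hdvd : n ∣ m :=
            hassoc.symm.dvd.trans (EuclideanDomain.gcd_dvd_right n m)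
          exact h ((hprime n hn).associated_of_dvd (hprime m hm) hdvd)
      have hg1 : Zsqrtd.norm (EuclideanDomain.gcd n m) = 1 :=
        (Zsqrtd.norm_eq_one_iff' (by norm_num) _).2 hunit
      rw [hg1]
      norm_num
  -- bound the sum
  have hsum : (∑ n ∈ F₁, ∑ m ∈ F₁,
      (Zsqrtd.norm (EuclideanDomain.gcd n m) : ℝ) /
        ((Zsqrtd.norm n : ℝ) * (Zsqrtd.norm m : ℝ))) <
      L ^ 2 + 4 * L := by
    have hmain : (∑ n ∈ F₁, ∑ m ∈ F₁,
        (Zsqrtd.norm (EuclideanDomain.gcd n m) : ℝ) /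
          ((Zsqrtd.norm n : ℝ) * (Zsqrtd.norm m : ℝ))) <
        ∑ n ∈ F₁, ((∑ m ∈ F₁, 1 / ((Zsqrtd.norm n : ℝ) * (Zsqrtd.norm m : ℝ)))
          + 4 / (Zsqrtd.norm n : ℝ)) := by
      apply Finset.sum_lt_sum_of_nonempty hF
      intro n hn
      rw [Finset.sum_congr rfl (hterm n hn), Finset.sum_add_distrib]
      apply (add_lt_add_iff_left _).2
      -- bound the associated part
      have hconst : ∀ m ∈ F₁.filter (fun m => Associated n m),
          (1 / (Zsqrtd.norm n : ℝ) - 1 / ((Zsqrtd.norm n : ℝ) * (Zsqrtd.norm m : ℝ)))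
          = 1 / (Zsqrtd.norm n : ℝ) - 1 / ((Zsqrtd.norm n : ℝ) * (Zsqrtd.norm n : ℝ)) := by
        intro m hm
        obtain ⟨hmF, hassoc⟩ := Finset.mem_filter.1 hm
        rw [Zsqrtd.norm_eq_of_associated (by norm_num) hassoc]
      rw [show (∑ m ∈ F₁, if Associated n m then 1 / ((Zsqrtd.norm n : ℝ)) - 1 / ((Zsqrtd.norm n : ℝ) * (Zsqrtd.norm m : ℝ)) else 0) = ∑ m ∈ F₁.filter (fun m => Associated n m), (1 / ((Zsqrtd.norm n : ℝ)) - 1 / ((Zsqrtd.norm n : ℝ) * (Zsqrtd.norm m : ℝ))) from (Finset.sum_filter _ _).symm, Finset.sum_congr rfl hconst, Finset.sum_const, nsmul_eq_mul]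
      have hNpos := hnormpos n hn
      have hN1 := hnorm1 n hn
      have hcnonneg : (0:ℝ) ≤ 1 / (Zsqrtd.norm n : ℝ)
          - 1 / ((Zsqrtd.norm n : ℝ) * (Zsqrtd.norm n : ℝ)) := by
        rw [sub_nonneg]
        apply div_le_div_of_nonneg_left (by norm_num) hNpos
        nlinarith
      have hcard : ((F₁.filter (fun m => Associated n m)).card : ℝ) ≤ 4 := by
        exact_mod_cast assoc_card_le F₁ n
      calc ((F₁.filter (fun m => Associated n m)).card : ℝ) *
            (1 / (Zsqrtd.norm n : ℝ) - 1 / ((Zsqrtd.norm n : ℝ) * (Zsqrtd.norm n : ℝ)))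
          ≤ 4 * (1 / (Zsqrtd.norm n : ℝ)
              - 1 / ((Zsqrtd.norm n : ℝ) * (Zsqrtd.norm n : ℝ))) :=
            mul_le_mul_of_nonneg_right hcard hcnonneg
        _ < 4 * (1 / (Zsqrtd.norm n : ℝ)) := by
            apply mul_lt_mul_of_pos_left _ (by norm_num)
            have : 0 < 1 / ((Zsqrtd.norm n : ℝ) * (Zsqrtd.norm n : ℝ)) :=
              div_pos one_pos (mul_pos hNpos hNpos)
            linarith
        _ = 4 / (Zsqrtd.norm n : ℝ) := by ring
    refine lt_of_lt_of_le hmain (le_of_eq ?_)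
    rw [Finset.sum_add_distrib]
    congr 1
    · rw [sq, hLdef, Lweight, Finset.sum_mul_sum]
      apply Finset.sum_congr rfl
      intro n _
      apply Finset.sum_congr rfl
      intro m _
      rw [div_mul_div_comm, one_mul]
    · rw [hLdef, Lweight, Finset.mul_sum]
      apply Finset.sum_congr rfl
      intro n _
      rw [mul_one_div]
  calc (1 / L ^ 2) *
        (∑ n ∈ F₁, ∑ m ∈ F₁,
          (Zsqrtd.norm (EuclideanDomain.gcd n m) : ℝ) /
            ((Zsqrtd.norm n : ℝ) * (Zsqrtd.norm m : ℝ)))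
      < (1 / L ^ 2) * (L ^ 2 + 4 * L) :=
        mul_lt_mul_of_pos_left hsum (div_pos one_pos (pow_pos hLpos 2))
    _ = 1 + 4 / L := by field_simp
end

section
/- Let F₁, F₂ be nonempty finite sets of Gaussian primes, and let F₁F₂ = {pq : p ∈ F₁, q ∈ F₂}. Assume every element of F₁F₂ has a unique representation as such a product. Then (1/L(F₁F₂)²) ∑_{n,m∈F₁F₂} N(gcd(n,m))/(N(n)N(m)) < (1 + 8/L(F₁))(1 + 8/L(F₂)). -/
open Finset

open EuclideanDomain in
/-- norm of the gcd, as a real number, divided by the product of the norms -/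
noncomputable def auxf (x y : GaussianInt) : ℝ :=
  (Zsqrtd.norm (EuclideanDomain.gcd x y) : ℝ) / ((Zsqrtd.norm x : ℝ) * (Zsqrtd.norm y : ℝ))

section aux
open EuclideanDomain

local notation "ℤi" => GaussianInt

lemma aux_units (u : ℤi) (hu : IsUnit u) :
    u = 1 ∨ u = -1 ∨ u = ⟨0,1⟩ ∨ u = ⟨0,-1⟩ := by
  have h : u.norm = 1 := (Zsqrtd.norm_eq_one_iff' (by norm_num) u).mpr hu
  obtain ⟨x, y⟩ := u
  simp only [Zsqrtd.norm] at h
  have hx1 : -1 ≤ x := by nlinarith [mul_self_nonneg y]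
  have hx2 : x ≤ 1 := by nlinarith [mul_self_nonneg y]
  have hy1 : -1 ≤ y := by nlinarith [mul_self_nonneg x]
  have hy2 : y ≤ 1 := by nlinarith [mul_self_nonneg x]
  interval_cases x <;> interval_cases y <;> simp_all [Zsqrtd.ext_iff]

lemma aux_card_assoc (F : Finset ℤi) (z : ℤi) [DecidablePred fun w => Associated w z] :
    (F.filter fun w => Associated w z).card ≤ 4 := by
  have hsub : (F.filter fun w => Associated w z) ⊆ ({z, -z, z*⟨0,1⟩, z*⟨0,-1⟩} : Finset ℤi) := by
    intro w hw
    have hassoc : Associated z w := ((Finset.mem_filter.mp hw).2).symm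
    obtain ⟨u, hu⟩ := hassoc
    rcases aux_units u.val u.isUnit with h | h | h | h <;>
      simp [← hu, h, Finset.mem_insert, mul_neg_one]
  refine (Finset.card_le_card hsub).trans ?_
  refine (Finset.card_insert_le _ _).trans (Nat.succ_le_succ ?_)
  refine (Finset.card_insert_le _ _).trans (Nat.succ_le_succ ?_)
  exact (Finset.card_insert_le _ _).trans (Nat.succ_le_succ (Finset.card_singleton _).le)

lemma aux_dvd_prime {p d : ℤi} (hp : Prime p) (h : d ∣ p) :
    IsUnit d ∨ Associated d p := by
  obtain ⟨c, hc⟩ := h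
  rcases (hp.irreducible.isUnit_or_isUnit hc) with h1 | h1
  · exact Or.inl h1
  · exact Or.inr ⟨h1.unit, by rw [hc]; simp⟩

lemma aux_dvd_mul_primes {p q d : ℤi} (hp : Prime p) (hq : Prime q) (h : d ∣ p * q) :
    IsUnit d ∨ Associated d p ∨ Associated d q ∨ Associated d (p * q) := by
  obtain ⟨c, hc⟩ := h
  have hpd : p ∣ d * c := ⟨q, by rw [← hc]⟩
  rcases hp.dvd_or_dvd hpd with h1 | h1
  · obtain ⟨e, rfl⟩ := h1
    have he : e ∣ q := by
      have : p * e ∣ p * q := ⟨c, hc⟩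
      exact (mul_dvd_mul_iff_left hp.ne_zero).mp this
    rcases aux_dvd_prime hq he with h2 | h2
    · exact Or.inr (Or.inl (associated_mul_unit_left p e h2))
    · exact Or.inr (Or.inr (Or.inr (Associated.mul_left p h2)))
  · obtain ⟨c', rfl⟩ := h1
    have hq' : q = d * c' := by
      have : p * q = p * (d * c') := by rw [hc]; ring
      exact mul_left_cancel₀ hp.ne_zero this
    rcases aux_dvd_prime hq ⟨c', hq'⟩ with h2 | h2
    · exact Or.inl h2
    · exact Or.inr (Or.inr (Or.inl h2))

lemma aux_gcd_assoc_left {x y : ℤi} (h : Associated x y) : Associated (gcd x y) x :=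
  associated_of_dvd_dvd (gcd_dvd_left x y) (dvd_gcd dvd_rfl h.dvd)

lemma aux_norm_gcd_assoc {x y : ℤi} (h : Associated x y) : (gcd x y).norm = x.norm :=
  Zsqrtd.norm_eq_of_associated (by norm_num) (aux_gcd_assoc_left h)

lemma aux_norm_gcd_one {p q : ℤi} (hp : Prime p) (hq : Prime q) (h : ¬ Associated p q) :
    (gcd p q).norm = 1 := by
  rcases aux_dvd_prime hp (gcd_dvd_left p q) with h1 | h1
  · exact (Zsqrtd.norm_eq_one_iff' (by norm_num) _).mpr h1
  · exact absurd (hp.associated_of_dvd hq (h1.symm.dvd.trans (gcd_dvd_right p q))) h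

lemma aux_norm_gcd_pos {x y : ℤi} (hx : x ≠ 0) : 1 ≤ (gcd x y).norm := by
  have h0 : gcd x y ≠ 0 := fun h => hx (EuclideanDomain.gcd_eq_zero_iff.mp h).1
  have := GaussianInt.norm_pos.mpr h0
  omega

lemma aux_norm_prime_pos {p : ℤi} (hp : Prime p) : 1 ≤ p.norm := by
  have := GaussianInt.norm_pos.mpr hp.ne_zero
  omega

lemma aux_norm_gcd_comm (x y : ℤi) : (gcd x y).norm = (gcd y x).norm :=
  Zsqrtd.norm_eq_of_associated (by norm_num)
    (associated_of_dvd_dvd (dvd_gcd (gcd_dvd_right x y) (gcd_dvd_left x y))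
      (dvd_gcd (gcd_dvd_right y x) (gcd_dvd_left y x)))

lemma auxf_comm (x y : ℤi) : auxf x y = auxf y x := by
  rw [auxf, auxf, aux_norm_gcd_comm, mul_comm]

lemma auxf_nonneg (x y : ℤi) : 0 ≤ auxf x y := by
  rw [auxf]
  have h1 : (0:ℝ) ≤ ((gcd x y).norm : ℝ) := by exact_mod_cast GaussianInt.norm_nonneg _
  have h2 : (0:ℝ) ≤ (x.norm : ℝ) := by exact_mod_cast GaussianInt.norm_nonneg _
  have h3 : (0:ℝ) ≤ (y.norm : ℝ) := by exact_mod_cast GaussianInt.norm_nonneg _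
  positivity

lemma aux_core {p₁ q₁ p₂ q₂ : ℤi} (hp₁ : Prime p₁) (hq₁ : Prime q₁)
    (hp₂ : Prime p₂) (hq₂ : Prime q₂) :
    (gcd (p₁ * q₁) (p₂ * q₂)).norm + 1 ≤
      (gcd p₁ p₂).norm * (gcd q₁ q₂).norm + (gcd p₁ q₂).norm * (gcd q₁ p₂).norm := by
  set a := (gcd p₁ p₂).norm with ha
  set b := (gcd q₁ q₂).norm with hb
  set c := (gcd p₁ q₂).norm with hc
  set d := (gcd q₁ p₂).norm with hd
  have ha1 : 1 ≤ a := aux_norm_gcd_pos hp₁.ne_zero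
  have hb1 : 1 ≤ b := aux_norm_gcd_pos hq₁.ne_zero
  have hc1 : 1 ≤ c := aux_norm_gcd_pos hp₁.ne_zero
  have hd1 : 1 ≤ d := aux_norm_gcd_pos hq₁.ne_zero
  have hNp₁ : 1 ≤ p₁.norm := aux_norm_prime_pos hp₁
  have hNq₁ : 1 ≤ q₁.norm := aux_norm_prime_pos hq₁
  have hg1 : gcd (p₁ * q₁) (p₂ * q₂) ∣ p₁ * q₁ := gcd_dvd_left _ _
  have hg2 : gcd (p₁ * q₁) (p₂ * q₂) ∣ p₂ * q₂ := gcd_dvd_right _ _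
  rcases aux_dvd_mul_primes hp₁ hq₁ hg1 with h | h | h | h
  · have : (gcd (p₁ * q₁) (p₂ * q₂)).norm = 1 :=
      (Zsqrtd.norm_eq_one_iff' (by norm_num) _).mpr h
    nlinarith
  · have hN : (gcd (p₁ * q₁) (p₂ * q₂)).norm = p₁.norm := by
      rw [Zsqrtd.norm_eq_of_associated (by norm_num) h]
    have hdvd : p₁ ∣ p₂ * q₂ := h.symm.dvd.trans hg2
    rcases hp₁.dvd_or_dvd hdvd with h1 | h1
    · have : a = p₁.norm := by rw [ha, aux_norm_gcd_assoc (hp₁.associated_of_dvd hp₂ h1)]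
      nlinarith
    · have : c = p₁.norm := by rw [hc, aux_norm_gcd_assoc (hp₁.associated_of_dvd hq₂ h1)]
      nlinarith
  · have hN : (gcd (p₁ * q₁) (p₂ * q₂)).norm = q₁.norm := by
      rw [Zsqrtd.norm_eq_of_associated (by norm_num) h]
    have hdvd : q₁ ∣ p₂ * q₂ := h.symm.dvd.trans hg2
    rcases hq₁.dvd_or_dvd hdvd with h1 | h1
    · have : d = q₁.norm := by rw [hd, aux_norm_gcd_assoc (hq₁.associated_of_dvd hp₂ h1)]
      nlinarith
    · have : b = q₁.norm := by rw [hb, aux_norm_gcd_assoc (hq₁.associated_of_dvd hq₂ h1)]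
      nlinarith
  · have hN : (gcd (p₁ * q₁) (p₂ * q₂)).norm = p₁.norm * q₁.norm := by
      rw [Zsqrtd.norm_eq_of_associated (by norm_num) h, Zsqrtd.norm_mul]
    have hdvd : p₁ * q₁ ∣ p₂ * q₂ := h.symm.dvd.trans hg2
    have hpd : p₁ ∣ p₂ * q₂ := (dvd_mul_right p₁ q₁).trans hdvd
    rcases hp₁.dvd_or_dvd hpd with h1 | h1
    · have hap : Associated p₁ p₂ := hp₁.associated_of_dvd hp₂ h1
      have haa : a = p₁.norm := by rw [ha, aux_norm_gcd_assoc hap]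
      obtain ⟨u, hu⟩ := hap
      have hqq : q₁ ∣ q₂ := by
        have h2 : p₁ * q₁ ∣ p₁ * (↑u * q₂) := by
          rw [show p₁ * (↑u * q₂) = p₂ * q₂ by rw [← hu]; ring]; exact hdvd
        exact (Units.dvd_mul_left).mp ((mul_dvd_mul_iff_left hp₁.ne_zero).mp h2)
      have hab : b = q₁.norm := by rw [hb, aux_norm_gcd_assoc (hq₁.associated_of_dvd hq₂ hqq)]
      nlinarith
    · have hap : Associated p₁ q₂ := hp₁.associated_of_dvd hq₂ h1
      have hcc : c = p₁.norm := by rw [hc, aux_norm_gcd_assoc hap]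
      obtain ⟨u, hu⟩ := hap
      have hqq : q₁ ∣ p₂ := by
        have h2 : p₁ * q₁ ∣ p₁ * (↑u * p₂) := by
          rw [show p₁ * (↑u * p₂) = p₂ * q₂ by rw [← hu]; ring]; exact hdvd
        exact (Units.dvd_mul_left).mp ((mul_dvd_mul_iff_left hp₁.ne_zero).mp h2)
      have hdd : d = q₁.norm := by rw [hd, aux_norm_gcd_assoc (hq₁.associated_of_dvd hp₂ hqq)]
      nlinarith

lemma aux_sum_bound (F G : Finset ℤi) (hF : ∀ p ∈ F, Prime p) (hG : ∀ q ∈ G, Prime q) :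
    ∑ p ∈ F, ∑ q ∈ G, auxf p q
      ≤ (∑ p ∈ F, 1 / (Zsqrtd.norm p : ℝ)) * (∑ q ∈ G, 1 / (Zsqrtd.norm q : ℝ))
        + 4 * ∑ q ∈ G, 1 / (Zsqrtd.norm q : ℝ) := by
  classical
  have hterm : ∀ p ∈ F, ∀ q ∈ G,
      auxf p q ≤ (1 / (Zsqrtd.norm p : ℝ)) * (1 / (Zsqrtd.norm q : ℝ))
        + (if Associated p q then 1 / (Zsqrtd.norm q : ℝ) else 0) := by
    intro p hp q hq
    have hp' := hF p hp; have hq' := hG q hq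
    have hNp : (1:ℝ) ≤ (p.norm : ℝ) := by exact_mod_cast aux_norm_prime_pos hp'
    have hNq : (1:ℝ) ≤ (q.norm : ℝ) := by exact_mod_cast aux_norm_prime_pos hq'
    rw [auxf]
    by_cases hass : Associated p q
    · rw [if_pos hass, aux_norm_gcd_assoc hass]
      have hne : (p.norm : ℝ) = (q.norm : ℝ) := by
        exact_mod_cast Zsqrtd.norm_eq_of_associated (by norm_num) hass
      rw [hne]
      have h1 : (q.norm:ℝ) / ((q.norm:ℝ) * (q.norm:ℝ)) = 1 / (q.norm:ℝ) := by
        rw [div_mul_eq_div_div_swap, _root_.div_self (by positivity)]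
      rw [h1]
      have h2 : (0:ℝ) < 1 / (q.norm:ℝ) * (1 / (q.norm:ℝ)) := by positivity
      linarith
    · rw [if_neg hass, aux_norm_gcd_one hp' hq' hass]
      push_cast
      rw [one_div_mul_one_div]
      simp
  calc ∑ p ∈ F, ∑ q ∈ G, auxf p q
      ≤ ∑ p ∈ F, ∑ q ∈ G, ((1 / (Zsqrtd.norm p : ℝ)) * (1 / (Zsqrtd.norm q : ℝ))
          + (if Associated p q then 1 / (Zsqrtd.norm q : ℝ) else 0)) :=
        Finset.sum_le_sum fun p hp => Finset.sum_le_sum fun q hq => hterm p hp q hq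
    _ = (∑ p ∈ F, ∑ q ∈ G, (1 / (Zsqrtd.norm p : ℝ)) * (1 / (Zsqrtd.norm q : ℝ)))
          + ∑ p ∈ F, ∑ q ∈ G, (if Associated p q then 1 / (Zsqrtd.norm q : ℝ) else 0) := by
        simp [Finset.sum_add_distrib]
    _ ≤ (∑ p ∈ F, 1 / (Zsqrtd.norm p : ℝ)) * (∑ q ∈ G, 1 / (Zsqrtd.norm q : ℝ))
          + 4 * ∑ q ∈ G, 1 / (Zsqrtd.norm q : ℝ) := by
        refine add_le_add (le_of_eq (Finset.sum_mul_sum F G _ _).symm) ?_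
        rw [Finset.sum_comm]
        have hq4 : ∀ q ∈ G, ∑ p ∈ F, (if Associated p q then 1 / (Zsqrtd.norm q : ℝ) else 0)
            ≤ 4 * (1 / (Zsqrtd.norm q : ℝ)) := by
          intro q hq
          have heq : (∑ p ∈ F, if Associated p q then 1 / (Zsqrtd.norm q : ℝ) else 0)
              = ∑ p ∈ F.filter (fun w => Associated w q), 1 / (Zsqrtd.norm q : ℝ) :=
            (Finset.sum_filter _ _).symm
          rw [heq, Finset.sum_const, nsmul_eq_mul]
          have hcard : ((F.filter fun w => Associated w q).card : ℝ) ≤ 4 := by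
            exact_mod_cast aux_card_assoc F q
          have hnn : (0:ℝ) ≤ 1 / (Zsqrtd.norm q : ℝ) := by
            have : (0:ℝ) ≤ (q.norm : ℝ) := by exact_mod_cast GaussianInt.norm_nonneg q
            positivity
          exact mul_le_mul_of_nonneg_right hcard hnn
        calc ∑ q ∈ G, ∑ p ∈ F, (if Associated p q then 1 / (Zsqrtd.norm q : ℝ) else 0)
            ≤ ∑ q ∈ G, 4 * (1 / (Zsqrtd.norm q : ℝ)) := Finset.sum_le_sum hq4
          _ = 4 * ∑ q ∈ G, 1 / (Zsqrtd.norm q : ℝ) := by rw [Finset.mul_sum]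

lemma aux4 (s t u v : Finset ℤi) (f g : ℤi → ℤi → ℝ) :
    (∑ a ∈ s, ∑ b ∈ t, f a b) * (∑ c ∈ u, ∑ d ∈ v, g c d)
      = ∑ a ∈ s, ∑ c ∈ u, ∑ b ∈ t, ∑ d ∈ v, f a b * g c d := by
  rw [Finset.sum_mul_sum]
  exact Finset.sum_congr rfl fun a _ => Finset.sum_congr rfl fun c _ =>
    Finset.sum_mul_sum t v _ _

end aux

theorem stmt_3 (F₁ F₂ : Finset GaussianInt) (hF₁ : F₁.Nonempty) (hF₂ : F₂.Nonempty)
    (hprime₁ : ∀ p ∈ F₁, Prime p) (hprime₂ : ∀ p ∈ F₂, Prime p)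
    (huniq : ∀ p₁ ∈ F₁, ∀ q₁ ∈ F₂, ∀ p₂ ∈ F₁, ∀ q₂ ∈ F₂,
      p₁ * q₁ = p₂ * q₂ → p₁ = p₂ ∧ q₁ = q₂) :
    (1 / (Lweight ((F₁ ×ˢ F₂).image fun pq => pq.1 * pq.2)) ^ 2) *
        ∑ n ∈ (F₁ ×ˢ F₂).image (fun pq => pq.1 * pq.2),
          ∑ m ∈ (F₁ ×ˢ F₂).image (fun pq => pq.1 * pq.2),
            (Zsqrtd.norm (EuclideanDomain.gcd n m) : ℝ) /
              ((Zsqrtd.norm n : ℝ) * (Zsqrtd.norm m : ℝ)) <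
      (1 + 8 / Lweight F₁) * (1 + 8 / Lweight F₂) := by
  classical
  have hpos : ∀ (F : Finset GaussianInt), (∀ p ∈ F, Prime p) → F.Nonempty → 0 < Lweight F := by
    intro F hp hne
    refine Finset.sum_pos (fun i hi => ?_) hne
    have h1 : (1:ℝ) ≤ (Zsqrtd.norm i : ℝ) := by exact_mod_cast aux_norm_prime_pos (hp i hi)
    positivity
  have hL₁ := hpos F₁ hprime₁ hF₁
  have hL₂ := hpos F₂ hprime₂ hF₂
  have hinj : ∀ x ∈ F₁ ×ˢ F₂, ∀ y ∈ F₁ ×ˢ F₂, x.1 * x.2 = y.1 * y.2 → x = y := by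
    rintro ⟨a, b⟩ hx ⟨c, d⟩ hy h
    simp only [Finset.mem_product] at hx hy
    obtain ⟨h1, h2⟩ := huniq a hx.1 b hx.2 c hy.1 d hy.2 h
    simp [Prod.ext_iff, h1, h2]
  have hLG : Lweight ((F₁ ×ˢ F₂).image fun pq => pq.1 * pq.2) = Lweight F₁ * Lweight F₂ := by
    rw [Lweight, Finset.sum_image hinj, Finset.sum_product, Lweight, Lweight,
      Finset.sum_mul_sum]
    refine Finset.sum_congr rfl fun p _ => Finset.sum_congr rfl fun q _ => ?_
    rw [Zsqrtd.norm_mul]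
    push_cast
    rw [one_div_mul_one_div]
  have hS : (∑ n ∈ (F₁ ×ˢ F₂).image (fun pq => pq.1 * pq.2),
        ∑ m ∈ (F₁ ×ˢ F₂).image (fun pq => pq.1 * pq.2),
          (Zsqrtd.norm (EuclideanDomain.gcd n m) : ℝ) /
            ((Zsqrtd.norm n : ℝ) * (Zsqrtd.norm m : ℝ)))
      = ∑ p₁ ∈ F₁, ∑ q₁ ∈ F₂, ∑ p₂ ∈ F₁, ∑ q₂ ∈ F₂, auxf (p₁ * q₁) (p₂ * q₂) := by
    rw [Finset.sum_image hinj, Finset.sum_product]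
    refine Finset.sum_congr rfl fun p₁ _ => Finset.sum_congr rfl fun q₁ _ => ?_
    rw [Finset.sum_image hinj, Finset.sum_product]
    simp only [auxf]
  have hterm : ∀ p₁ ∈ F₁, ∀ q₁ ∈ F₂, ∀ p₂ ∈ F₁, ∀ q₂ ∈ F₂,
      auxf (p₁ * q₁) (p₂ * q₂)
        + (1 / (Zsqrtd.norm p₁ : ℝ) * (1 / (Zsqrtd.norm p₂ : ℝ)))
          * (1 / (Zsqrtd.norm q₁ : ℝ) * (1 / (Zsqrtd.norm q₂ : ℝ)))
        ≤ auxf p₁ p₂ * auxf q₁ q₂ + auxf p₁ q₂ * auxf q₁ p₂ := by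
    intro p₁ h₁ q₁ h₂ p₂ h₃ q₂ h₄
    have hp₁ := hprime₁ p₁ h₁; have hq₁ := hprime₂ q₁ h₂
    have hp₂ := hprime₁ p₂ h₃; have hq₂ := hprime₂ q₂ h₄
    have hx1 : (0:ℝ) < (Zsqrtd.norm p₁ : ℝ) := by
      exact_mod_cast lt_of_lt_of_le one_pos (aux_norm_prime_pos hp₁)
    have hx2 : (0:ℝ) < (Zsqrtd.norm p₂ : ℝ) := by
      exact_mod_cast lt_of_lt_of_le one_pos (aux_norm_prime_pos hp₂)
    have hy1 : (0:ℝ) < (Zsqrtd.norm q₁ : ℝ) := by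
      exact_mod_cast lt_of_lt_of_le one_pos (aux_norm_prime_pos hq₁)
    have hy2 : (0:ℝ) < (Zsqrtd.norm q₂ : ℝ) := by
      exact_mod_cast lt_of_lt_of_le one_pos (aux_norm_prime_pos hq₂)
    have hcore : ((EuclideanDomain.gcd (p₁ * q₁) (p₂ * q₂)).norm : ℝ) + 1
        ≤ ((EuclideanDomain.gcd p₁ p₂).norm : ℝ) * ((EuclideanDomain.gcd q₁ q₂).norm : ℝ)
          + ((EuclideanDomain.gcd p₁ q₂).norm : ℝ) * ((EuclideanDomain.gcd q₁ p₂).norm : ℝ) := by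
      exact_mod_cast aux_core hp₁ hq₁ hp₂ hq₂
    simp only [auxf, Zsqrtd.norm_mul]
    push_cast
    set g0 := ((EuclideanDomain.gcd (p₁ * q₁) (p₂ * q₂)).norm : ℝ)
    set a := ((EuclideanDomain.gcd p₁ p₂).norm : ℝ)
    set b := ((EuclideanDomain.gcd q₁ q₂).norm : ℝ)
    set c := ((EuclideanDomain.gcd p₁ q₂).norm : ℝ)
    set d := ((EuclideanDomain.gcd q₁ p₂).norm : ℝ)
    set x1 := (Zsqrtd.norm p₁ : ℝ); set x2 := (Zsqrtd.norm p₂ : ℝ)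
    set y1 := (Zsqrtd.norm q₁ : ℝ); set y2 := (Zsqrtd.norm q₂ : ℝ)
    have hD : (0:ℝ) < x1 * y1 * x2 * y2 := by positivity
    have e1 : g0 / (x1 * y1 * (x2 * y2)) = g0 / (x1 * y1 * x2 * y2) := by ring
    have e4 : 1 / x1 * (1 / x2) * (1 / y1 * (1 / y2)) = 1 / (x1 * y1 * x2 * y2) := by ring
    have e2 : a / (x1 * x2) * (b / (y1 * y2)) = a * b / (x1 * y1 * x2 * y2) := by ring
    have e3 : c / (x1 * y2) * (d / (y1 * x2)) = c * d / (x1 * y1 * x2 * y2) := by ring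
    rw [e1, e4, e2, e3, ← add_div, ← add_div]
    exact div_le_div_of_nonneg_right hcore hD.le
  have hsum4 : (∑ p₁ ∈ F₁, ∑ q₁ ∈ F₂, ∑ p₂ ∈ F₁, ∑ q₂ ∈ F₂,
        (auxf (p₁ * q₁) (p₂ * q₂)
          + (1 / (Zsqrtd.norm p₁ : ℝ) * (1 / (Zsqrtd.norm p₂ : ℝ)))
            * (1 / (Zsqrtd.norm q₁ : ℝ) * (1 / (Zsqrtd.norm q₂ : ℝ)))))
      ≤ ∑ p₁ ∈ F₁, ∑ q₁ ∈ F₂, ∑ p₂ ∈ F₁, ∑ q₂ ∈ F₂,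
          (auxf p₁ p₂ * auxf q₁ q₂ + auxf p₁ q₂ * auxf q₁ p₂) :=
    Finset.sum_le_sum fun p₁ h₁ => Finset.sum_le_sum fun q₁ h₂ =>
      Finset.sum_le_sum fun p₂ h₃ => Finset.sum_le_sum fun q₂ h₄ =>
        hterm p₁ h₁ q₁ h₂ p₂ h₃ q₂ h₄
  simp only [Finset.sum_add_distrib] at hsum4
  have hABeq : (∑ p₁ ∈ F₁, ∑ p₂ ∈ F₁, auxf p₁ p₂) * (∑ q₁ ∈ F₂, ∑ q₂ ∈ F₂, auxf q₁ q₂)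
      = ∑ p₁ ∈ F₁, ∑ q₁ ∈ F₂, ∑ p₂ ∈ F₁, ∑ q₂ ∈ F₂, auxf p₁ p₂ * auxf q₁ q₂ :=
    aux4 F₁ F₁ F₂ F₂ auxf auxf
  have hX' : (∑ p ∈ F₁, ∑ q ∈ F₂, auxf p q) = ∑ q ∈ F₂, ∑ p ∈ F₁, auxf q p := by
    rw [Finset.sum_comm]
    exact Finset.sum_congr rfl fun q _ => Finset.sum_congr rfl fun p _ => auxf_comm p q
  have hXXeq : (∑ p ∈ F₁, ∑ q ∈ F₂, auxf p q) * (∑ p ∈ F₁, ∑ q ∈ F₂, auxf p q)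
      = ∑ p₁ ∈ F₁, ∑ q₁ ∈ F₂, ∑ p₂ ∈ F₁, ∑ q₂ ∈ F₂, auxf p₁ q₂ * auxf q₁ p₂ := by
    nth_rewrite 2 [hX']
    rw [aux4 F₁ F₂ F₂ F₁ auxf auxf]
    exact Finset.sum_congr rfl fun p₁ _ => Finset.sum_congr rfl fun q₁ _ => Finset.sum_comm
  have hLeq : (Lweight F₁ * Lweight F₁) * (Lweight F₂ * Lweight F₂)
      = ∑ p₁ ∈ F₁, ∑ q₁ ∈ F₂, ∑ p₂ ∈ F₁, ∑ q₂ ∈ F₂,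
          (1 / (Zsqrtd.norm p₁ : ℝ) * (1 / (Zsqrtd.norm p₂ : ℝ)))
            * (1 / (Zsqrtd.norm q₁ : ℝ) * (1 / (Zsqrtd.norm q₂ : ℝ))) := by
    have h1 : Lweight F₁ * Lweight F₁
        = ∑ p₁ ∈ F₁, ∑ p₂ ∈ F₁, 1 / (Zsqrtd.norm p₁ : ℝ) * (1 / (Zsqrtd.norm p₂ : ℝ)) :=
      Finset.sum_mul_sum F₁ F₁ _ _
    have h2 : Lweight F₂ * Lweight F₂
        = ∑ q₁ ∈ F₂, ∑ q₂ ∈ F₂, 1 / (Zsqrtd.norm q₁ : ℝ) * (1 / (Zsqrtd.norm q₂ : ℝ)) :=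
      Finset.sum_mul_sum F₂ F₂ _ _
    rw [h1, h2]
    exact aux4 F₁ F₁ F₂ F₂ _ _
  have hAle := aux_sum_bound F₁ F₁ hprime₁ hprime₁
  have hBle := aux_sum_bound F₂ F₂ hprime₂ hprime₂
  have hXle1 := aux_sum_bound F₁ F₂ hprime₁ hprime₂
  have hXle2' := aux_sum_bound F₂ F₁ hprime₂ hprime₁
  rw [← hX'] at hXle2'
  have hXnn : (0:ℝ) ≤ ∑ p ∈ F₁, ∑ q ∈ F₂, auxf p q :=
    Finset.sum_nonneg fun _ _ => Finset.sum_nonneg fun _ _ => auxf_nonneg _ _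
  have hAnn : (0:ℝ) ≤ ∑ p₁ ∈ F₁, ∑ p₂ ∈ F₁, auxf p₁ p₂ :=
    Finset.sum_nonneg fun _ _ => Finset.sum_nonneg fun _ _ => auxf_nonneg _ _
  have hBnn : (0:ℝ) ≤ ∑ q₁ ∈ F₂, ∑ q₂ ∈ F₂, auxf q₁ q₂ :=
    Finset.sum_nonneg fun _ _ => Finset.sum_nonneg fun _ _ => auxf_nonneg _ _
  rw [hLG, hS]
  have hM : (0:ℝ) < (Lweight F₁ * Lweight F₂) ^ 2 := by positivity
  rw [div_mul_eq_mul_div, one_mul, div_lt_iff₀ hM]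
  have hR : (1 + 8 / Lweight F₁) * (1 + 8 / Lweight F₂) * (Lweight F₁ * Lweight F₂) ^ 2
      = ((Lweight F₁ + 8) * (Lweight F₂ + 8)) * (Lweight F₁ * Lweight F₂) := by
    field_simp
  rw [hR]
  have hABle : (∑ p₁ ∈ F₁, ∑ p₂ ∈ F₁, auxf p₁ p₂) * (∑ q₁ ∈ F₂, ∑ q₂ ∈ F₂, auxf q₁ q₂)
      ≤ (Lweight F₁ * Lweight F₁ + 4 * Lweight F₁) * (Lweight F₂ * Lweight F₂ + 4 * Lweight F₂) :=
    mul_le_mul hAle hBle hBnn (by positivity)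
  have hXXle : (∑ p ∈ F₁, ∑ q ∈ F₂, auxf p q) * (∑ p ∈ F₁, ∑ q ∈ F₂, auxf p q)
      ≤ (Lweight F₁ * Lweight F₂ + 4 * Lweight F₂) * (Lweight F₂ * Lweight F₁ + 4 * Lweight F₁) :=
    mul_le_mul hXle1 hXle2' hXnn (by positivity)
  rw [hABeq] at hABle
  rw [hXXeq] at hXXle
  rw [← hLeq] at hsum4
  nlinarith [mul_pos hL₁ hL₂, hsum4, hABle, hXXle]
end

section
/- Let (Φ_N) be a Følner sequence in the additive group of Gaussian integers (i.e., for every g ∈ 𝔾, |(Φ_N + g) △ Φ_N|/|Φ_N| → 0), let B ⊂ 𝔾∖{0} be a finite nonempty set, and let a : 𝔾 → ℂ be bounded by 1. Then limsup_{N→∞} | 𝔼_{n∈Φ_N} a(n) − (1/L(B)) ∑_{p∈B} (1/N(p)) 𝔼_{n∈Φ_N/p} a(pn) | ≤ ( (1/L(B)²) ∑_{p,q∈B} N(gcd(p,q))/(N(p)N(q)) − 1 )^{1/2}. -/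
open Finset Filter

/-- `Φ / p = {x : x * p ∈ Φ}` as a finset (correct whenever `p ≠ 0`). -/
def divSet (Φ : Finset GaussianInt) (p : GaussianInt) : Finset GaussianInt :=
  (Φ.image fun y => y / p).filter fun x => x * p ∈ Φ

/-- average of a function over a finset -/
noncomputable def avg (Φ : Finset GaussianInt) (a : GaussianInt → ℂ) : ℂ :=
  (∑ n ∈ Φ, a n) / (Φ.card : ℂ)

/-- Følner sequence in `(ℤ[i], +)` -/
def IsFolner (Φ : ℕ → Finset GaussianInt) : Prop :=
  (∀ N, (Φ N).Nonempty) ∧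
    ∀ g : GaussianInt,
      Tendsto (fun N => ((symmDiff ((Φ N).image fun n => n + g) (Φ N)).card : ℝ) / (Φ N).card)
        atTop (nhds 0)

attribute [local instance] Classical.propDecidable

/-! ### Algebraic preliminaries: `ℤ[i]` as a free `ℤ`-module and quotient cardinalities -/

noncomputable def gBasis : Module.Basis (Fin 2) ℤ GaussianInt :=
  Module.Basis.ofEquivFun
    { toFun := fun z => ![z.re, z.im]
      invFun := fun v => ⟨v 0, v 1⟩
      left_inv := fun z => by ext <;> simp
      right_inv := fun v => by funext i; fin_cases i <;> simp
      map_add' := fun x y => by funext i; fin_cases i <;> simp [Zsqrtd.re_add]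
      map_smul' := fun c x => by funext i; fin_cases i <;> simp [Zsqrtd.re_smul] }

instance : Module.Free ℤ GaussianInt := Module.Free.of_basis gBasis
instance : Module.Finite ℤ GaussianInt := Module.Finite.of_basis gBasis

theorem algNorm_eq (z : GaussianInt) : Algebra.norm ℤ z = Zsqrtd.norm z := by
  rw [Algebra.norm_eq_matrix_det gBasis, Matrix.det_fin_two]
  have h : ∀ (w : GaussianInt) i, gBasis.repr w i = ![w.re, w.im] i := fun w i => rfl
  have hb : ∀ i, gBasis i = ![⟨1,0⟩, ⟨0,1⟩] i := by
    rw [gBasis, Module.Basis.coe_ofEquivFun]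
    intro i; fin_cases i <;> rfl
  simp only [Algebra.leftMulMatrix_eq_repr_mul, h, hb]
  simp [Zsqrtd.norm_def, Zsqrtd.re_mul, Zsqrtd.im_mul]

/-! ### Følner equidistribution -/

lemma filter_card_sub_le {α : Type*} [DecidableEq α] (X Y : Finset α) (P : α → Prop)
    [DecidablePred P] :
    |((X.filter P).card : ℝ) - ((Y.filter P).card : ℝ)| ≤ ((symmDiff X Y).card : ℝ) := by
  have key : ∀ U V : Finset α, (U.filter P).card ≤ (V.filter P).card + (symmDiff U V).card := by
    intro U V
    have hsub : U.filter P ⊆ V.filter P ∪ symmDiff U V := by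
      intro n hn
      rw [Finset.mem_filter] at hn
      by_cases hnV : n ∈ V
      · exact Finset.mem_union_left _ (Finset.mem_filter.2 ⟨hnV, hn.2⟩)
      · refine Finset.mem_union_right _ ?_
        rw [symmDiff_def]
        exact Finset.mem_union_left _ (Finset.mem_sdiff.2 ⟨hn.1, hnV⟩)
    calc (U.filter P).card ≤ (V.filter P ∪ symmDiff U V).card := Finset.card_le_card hsub
      _ ≤ (V.filter P).card + (symmDiff U V).card := Finset.card_union_le _ _
  rw [abs_sub_le_iff]
  constructor
  · have := key X Y
    push_cast [← Nat.cast_le (α := ℝ)] at this ⊢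
    linarith
  · have := key Y X
    rw [symmDiff_comm] at this
    push_cast [← Nat.cast_le (α := ℝ)] at this ⊢
    linarith

lemma filter_card_shift {Q : Type*} [AddCommGroup Q] (π : GaussianInt →+ Q)
    (Φ : Finset GaussianInt) (g : GaussianInt) (q : Q) :
    (((Φ.image fun n => n + g).filter fun n => π n = q + π g).card)
      = ((Φ.filter fun n => π n = q).card) := by
  rw [Finset.filter_image]
  rw [Finset.card_image_of_injective _ (add_left_injective g)]
  congr 1
  apply Finset.filter_congr
  intro n _
  simp [map_add, add_left_inj]

lemma fiber_equidist {Q : Type*} [AddCommGroup Q] [Fintype Q] (π : GaussianInt →+ Q)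
    (hπ : Function.Surjective π)
    (Φ : ℕ → Finset GaussianInt) (hΦ : IsFolner Φ) (q : Q) :
    Tendsto (fun N => ((((Φ N).filter fun n => π n = q).card : ℝ)) / (Φ N).card)
      atTop (nhds (1 / (Fintype.card Q : ℝ))) := by
  set k := Fintype.card Q with hkdef
  have hk : 0 < (k : ℝ) := by exact_mod_cast Fintype.card_pos
  choose g hg using fun q' : Q => hπ (q' - q)
  have hcard : ∀ N, 0 < ((Φ N).card : ℝ) := fun N => by
    exact_mod_cast Finset.card_pos.2 (hΦ.1 N)
  have hsum : ∀ N, ∑ q' : Q, (((Φ N).filter fun n => π n = q').card : ℝ) = ((Φ N).card : ℝ) := by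
    intro N
    rw [← Nat.cast_sum]
    norm_cast
    exact (Finset.card_eq_sum_card_fiberwise (fun x _ => Finset.mem_univ (π x))).symm
  have hbound : ∀ N, |(((Φ N).filter fun n => π n = q).card : ℝ) / (Φ N).card - 1 / k|
      ≤ (1 / k) * ∑ q' : Q,
        ((symmDiff ((Φ N).image fun n => n + g q') (Φ N)).card : ℝ) / (Φ N).card := by
    intro N
    have h1 : (((Φ N).filter fun n => π n = q).card : ℝ) / (Φ N).card - 1 / k
        = (1 / k) * ∑ q' : Q, ((((Φ N).filter fun n => π n = q).card : ℝ)
            - (((Φ N).filter fun n => π n = q').card : ℝ)) / (Φ N).card := by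
      rw [← Finset.sum_div, Finset.sum_sub_distrib, hsum, Finset.sum_const, Finset.card_univ,
        nsmul_eq_mul]
      have hc := (hcard N).ne'
      have hk' := hk.ne'
      field_simp
      ring
    rw [h1, abs_mul, abs_of_pos (by positivity : (0:ℝ) < 1 / k)]
    apply mul_le_mul_of_nonneg_left _ (by positivity)
    refine (Finset.abs_sum_le_sum_abs _ _).trans ?_
    apply Finset.sum_le_sum
    intro q' _
    rw [abs_div, abs_of_pos (hcard N), div_le_div_iff_of_pos_right (hcard N)]
    have := filter_card_sub_le ((Φ N).image fun n => n + g q') (Φ N)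
      (fun n => π n = q + π (g q'))
    rw [filter_card_shift π (Φ N) (g q') q, hg q', add_sub_cancel] at this
    rw [abs_sub_comm]
    rw [abs_sub_comm] at this
    exact this
  rw [tendsto_iff_dist_tendsto_zero]
  simp only [Real.dist_eq]
  apply squeeze_zero (fun N => abs_nonneg _) hbound
  have : Tendsto (fun N => ∑ q' : Q,
      ((symmDiff ((Φ N).image fun n => n + g q') (Φ N)).card : ℝ) / (Φ N).card)
      atTop (nhds 0) := by
    have := tendsto_finset_sum (Finset.univ : Finset Q)
      (fun q' _ => hΦ.2 (g q'))
    simpa using this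
  have h := this.const_mul (1 / (k:ℝ))
  simpa using h

lemma dvd_density (Φ : ℕ → Finset GaussianInt) (hΦ : IsFolner Φ) (m : GaussianInt) (hm : m ≠ 0) :
    Tendsto (fun N => (((Φ N).filter fun n => m ∣ n).card : ℝ) / (Φ N).card)
      atTop (nhds (1 / (Zsqrtd.norm m : ℝ))) := by
  letI : Fintype (GaussianInt ⧸ Ideal.span {m}) :=
    @Fintype.ofFinite _ (Ideal.finiteQuotientOfFreeOfNeBot _ (mt Ideal.span_singleton_eq_bot.mp hm))
  have hcardQ : (Fintype.card (GaussianInt ⧸ Ideal.span {m}) : ℝ) = (Zsqrtd.norm m : ℝ) := by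
    rw [← Nat.card_eq_fintype_card, ← Submodule.cardQuot_apply, ← Ideal.absNorm_apply,
      Ideal.absNorm_span_singleton, algNorm_eq]
    rw [Nat.cast_natAbs]
    exact congrArg _ (abs_of_nonneg (Zsqrtd.norm_nonneg (by norm_num) m))
  have h := fiber_equidist ((Ideal.Quotient.mk (Ideal.span {m})).toAddMonoidHom)
    Ideal.Quotient.mk_surjective Φ hΦ 0
  rw [hcardQ] at h
  convert h using 2 with N
  congr 2
  refine congrArg _ (Finset.filter_congr fun n _ => ?_)
  simp only [RingHom.toAddMonoidHom_eq_coe, AddMonoidHom.coe_coe,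
    Ideal.Quotient.eq_zero_iff_dvd]

/-! ### `divSet` lemmas -/

lemma mem_divSet {Φ : Finset GaussianInt} {p x : GaussianInt} (hp : p ≠ 0) :
    x ∈ divSet Φ p ↔ x * p ∈ Φ := by
  simp only [divSet, Finset.mem_filter, Finset.mem_image]
  exact ⟨fun h => h.2, fun h => ⟨⟨x * p, h, mul_div_cancel_right₀ x hp⟩, h⟩⟩

lemma divSet_sum {Φ : Finset GaussianInt} {p : GaussianInt} (hp : p ≠ 0)
    (f : GaussianInt → ℂ) :
    ∑ x ∈ divSet Φ p, f (x * p) = ∑ n ∈ Φ.filter (fun n => p ∣ n), f n := by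
  refine Finset.sum_nbij' (fun x => x * p) (fun n => n / p) ?_ ?_ ?_ ?_ ?_
  · intro x hx
    rw [mem_divSet hp] at hx
    exact Finset.mem_filter.2 ⟨hx, Dvd.intro_left x rfl⟩
  · intro n hn
    rw [Finset.mem_filter] at hn
    obtain ⟨c, rfl⟩ := hn.2
    have hpc : p * c / p = c := by rw [mul_comm, mul_div_cancel_right₀ c hp]
    simpa [hpc, mem_divSet hp, mul_comm] using hn.1
  · intro x hx
    exact mul_div_cancel_right₀ x hp
  · intro n hn
    rw [Finset.mem_filter] at hn
    obtain ⟨c, rfl⟩ := hn.2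
    have hpc : p * c / p = c := by rw [mul_comm, mul_div_cancel_right₀ c hp]
    simp [hpc, mul_comm]
  · intro x hx
    rfl

lemma divSet_card {Φ : Finset GaussianInt} {p : GaussianInt} (hp : p ≠ 0) :
    (divSet Φ p).card = (Φ.filter (fun n => p ∣ n)).card := by
  have := divSet_sum (Φ := Φ) hp (fun _ => (1 : ℂ))
  simpa using this

set_option maxHeartbeats 1000000 in
theorem stmt_4 (Φ : ℕ → Finset GaussianInt) (hΦ : IsFolner Φ)
    (B : Finset GaussianInt) (hB : B.Nonempty) (hB0 : ∀ p ∈ B, p ≠ 0)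
    (a : GaussianInt → ℂ) (ha : ∀ n, ‖a n‖ ≤ 1) :
    Filter.limsup (fun N =>
        ‖avg (Φ N) a -
          (1 / Lweight B) * ∑ p ∈ B, (1 / (Zsqrtd.norm p : ℂ)) *
            avg (divSet (Φ N) p) (fun n => a (p * n))‖) atTop ≤
      Real.sqrt ((1 / (Lweight B) ^ 2) *
        ∑ p ∈ B, ∑ q ∈ B,
          (Zsqrtd.norm (EuclideanDomain.gcd p q) : ℝ) /
            ((Zsqrtd.norm p : ℝ) * (Zsqrtd.norm q : ℝ)) - 1) := by
  classical
  have hNp : ∀ p : GaussianInt, p ≠ 0 → 0 < (Zsqrtd.norm p : ℝ) := by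
    intro p hp
    have h0 : Zsqrtd.norm p ≠ 0 := fun h => hp ((Zsqrtd.norm_eq_zero_iff (by norm_num) p).mp h)
    have h1 := Zsqrtd.norm_nonneg (by norm_num : (-1:ℤ) ≤ 0) p
    exact_mod_cast lt_of_le_of_ne h1 (Ne.symm h0)
  set L := Lweight B with hLdef
  have hL : 0 < L := by
    rw [hLdef, Lweight]
    exact Finset.sum_pos (fun p hp => by have := hNp p (hB0 p hp); positivity) hB
  set dd : GaussianInt → ℕ → ℝ :=
    fun m N => (((Φ N).filter fun n => m ∣ n).card : ℝ) / ((Φ N).card : ℝ) with hdd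
  set w : GaussianInt → ℝ := fun n => (1/L) * ∑ p ∈ B, if p ∣ n then (1:ℝ) else 0 with hw
  set eps : ℕ → ℝ := fun N => (1/L) * ∑ p ∈ B, |1/(Zsqrtd.norm p : ℝ) - dd p N| with heps
  set DD : ℕ → ℝ := fun N => (∑ n ∈ Φ N, (1 - w n)^2) / ((Φ N).card : ℝ) with hDDdef
  set V : ℝ := (1/L^2) *
    (∑ p ∈ B, ∑ q ∈ B, (Zsqrtd.norm (EuclideanDomain.gcd p q) : ℝ) /
      ((Zsqrtd.norm p : ℝ) * (Zsqrtd.norm q : ℝ))) - 1 with hVdef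
  have hcard : ∀ N, 0 < ((Φ N).card : ℝ) := fun N => by
    exact_mod_cast Finset.card_pos.2 (hΦ.1 N)
  -- Step 1: pointwise bound
  have h1 : ∀ N, ‖avg (Φ N) a -
      (1 / L) * ∑ p ∈ B, (1 / (Zsqrtd.norm p : ℂ)) *
        avg (divSet (Φ N) p) (fun n => a (p * n))‖ ≤ eps N + Real.sqrt (DD N) := by
    intro N
    have hc := hcard N
    have hcC : ((Φ N).card : ℂ) ≠ 0 := by exact_mod_cast hc.ne'
    -- per-p approximation
    have hA : ∀ p ∈ B,
        ‖(∑ n ∈ (Φ N).filter fun n => p ∣ n, a n) / ((Φ N).card : ℂ)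
          - (1 / (Zsqrtd.norm p : ℂ)) * avg (divSet (Φ N) p) (fun n => a (p * n))‖
          ≤ |1 / (Zsqrtd.norm p : ℝ) - dd p N| := by
      intro p hp
      have hp0 := hB0 p hp
      have hNpR := hNp p hp0
      have hNpC : ((Zsqrtd.norm p : ℂ)) ≠ 0 :=
        Int.cast_ne_zero.mpr
          (fun h => hp0 ((Zsqrtd.norm_eq_zero_iff (by norm_num) p).mp h))
      have hsumEq : (∑ x ∈ divSet (Φ N) p, a (p * x))
          = ∑ n ∈ (Φ N).filter fun n => p ∣ n, a n := by
        rw [← divSet_sum hp0 a]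
        exact Finset.sum_congr rfl fun x _ => by rw [mul_comm]
      have havg : avg (divSet (Φ N) p) (fun n => a (p * n))
          = (∑ n ∈ (Φ N).filter fun n => p ∣ n, a n)
            / ((((Φ N).filter fun n => p ∣ n).card : ℕ) : ℂ) := by
        rw [avg, divSet_card hp0, hsumEq]
      rw [havg]
      set k := (((Φ N).filter fun n => p ∣ n).card) with hkdef
      set S : ℂ := ∑ n ∈ (Φ N).filter fun n => p ∣ n, a n with hSdef
      have hSle : ‖S‖ ≤ (k : ℝ) := by
        rw [hSdef]
        refine (norm_sum_le _ _).trans ?_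
        rw [hkdef]
        calc ∑ n ∈ (Φ N).filter fun n => p ∣ n, ‖a n‖
            ≤ ∑ n ∈ (Φ N).filter fun n => p ∣ n, 1 :=
              Finset.sum_le_sum fun n _ => ha n
          _ = (k : ℝ) := by simp [hkdef]
      have hddval : dd p N = (k : ℝ) / ((Φ N).card : ℝ) := by simp [hdd, hkdef]
      rcases Nat.eq_zero_or_pos k with hk0 | hkpos
      · have hfe : ((Φ N).filter fun n => p ∣ n) = ∅ := Finset.card_eq_zero.mp hk0
        have hS0 : S = 0 := by rw [hSdef, hfe, Finset.sum_empty]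
        rw [hS0]
        simp only [zero_div, mul_zero, sub_zero, norm_zero]
        exact abs_nonneg _
      · have hkR : (0:ℝ) < (k : ℝ) := by exact_mod_cast hkpos
        have hkC : ((k : ℕ) : ℂ) ≠ 0 := by exact_mod_cast hkpos.ne'
        have hid : S / ((Φ N).card : ℂ) - (1 / (Zsqrtd.norm p : ℂ)) * (S / ((k : ℕ) : ℂ))
            = (((1 / ((Φ N).card : ℝ) - 1 / ((Zsqrtd.norm p : ℝ) * (k : ℝ))) : ℝ) : ℂ) * S := by
          push_cast
          field_simp
        rw [hid, norm_mul, Complex.norm_real, Real.norm_eq_abs]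
        calc |1 / ((Φ N).card : ℝ) - 1 / ((Zsqrtd.norm p : ℝ) * (k : ℝ))| * ‖S‖
            ≤ |1 / ((Φ N).card : ℝ) - 1 / ((Zsqrtd.norm p : ℝ) * (k : ℝ))| * (k : ℝ) :=
              mul_le_mul_of_nonneg_left hSle (abs_nonneg _)
          _ = |1 / (Zsqrtd.norm p : ℝ) - dd p N| := by
              have habs : |1 / ((Φ N).card : ℝ) - 1 / ((Zsqrtd.norm p : ℝ) * (k : ℝ))| * (k:ℝ)
                  = |(1 / ((Φ N).card : ℝ) - 1 / ((Zsqrtd.norm p : ℝ) * (k : ℝ))) * (k:ℝ)| := by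
                rw [abs_mul, abs_of_nonneg hkR.le]
              rw [habs, hddval, abs_sub_comm]
              congr 1
              have gen : ∀ C NP K : ℝ, C ≠ 0 → NP ≠ 0 → K ≠ 0 →
                  (1/C - 1/(NP*K))*K = K/C - 1/NP := by
                intro C NP K h1 h2 h3
                field_simp
              exact gen _ _ _ hc.ne' hNpR.ne' hkR.ne'
    -- decomposition
    have hmid : avg (Φ N) a - (1 / (L:ℂ)) * ∑ p ∈ B, (1 / (Zsqrtd.norm p : ℂ)) *
          avg (divSet (Φ N) p) (fun n => a (p * n))
        = (avg (Φ N) a - (1 / (L:ℂ)) * ∑ p ∈ B,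
            (∑ n ∈ (Φ N).filter fun n => p ∣ n, a n) / ((Φ N).card : ℂ))
          + (1 / (L:ℂ)) * ∑ p ∈ B,
              ((∑ n ∈ (Φ N).filter fun n => p ∣ n, a n) / ((Φ N).card : ℂ)
                - (1 / (Zsqrtd.norm p : ℂ)) * avg (divSet (Φ N) p) (fun n => a (p * n))) := by
      rw [Finset.sum_sub_distrib]
      ring
    -- main Cauchy–Schwarz part
    have hB1 : ‖avg (Φ N) a - (1 / (L:ℂ)) * ∑ p ∈ B,
        (∑ n ∈ (Φ N).filter fun n => p ∣ n, a n) / ((Φ N).card : ℂ)‖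
        ≤ Real.sqrt (DD N) := by
      have hkey : avg (Φ N) a - (1 / (L:ℂ)) * ∑ p ∈ B,
            (∑ n ∈ (Φ N).filter fun n => p ∣ n, a n) / ((Φ N).card : ℂ)
          = (∑ n ∈ Φ N, (((1 - w n : ℝ)) : ℂ) * a n) / ((Φ N).card : ℂ) := by
        rw [avg, ← Finset.sum_div, ← mul_div_assoc, div_sub_div_same]
        congr 1
        have hfilter : ∀ p : GaussianInt, (∑ n ∈ (Φ N).filter fun n => p ∣ n, a n)
            = ∑ n ∈ Φ N, if p ∣ n then a n else 0 := fun p => Finset.sum_filter _ _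
        simp only [hfilter]
        rw [Finset.sum_comm, Finset.mul_sum, ← Finset.sum_sub_distrib]
        refine Finset.sum_congr rfl fun n hn => ?_
        have h2 : ∑ p ∈ B, (if p ∣ n then a n else 0)
            = (((∑ p ∈ B, if p ∣ n then (1:ℝ) else 0) : ℝ) : ℂ) * a n := by
          push_cast
          rw [Finset.sum_mul]
          exact Finset.sum_congr rfl fun p _ => by by_cases h : p ∣ n <;> simp [h]
        rw [h2]
        simp only [hw]
        push_cast
        ring
      rw [hkey, norm_div, Complex.norm_natCast]
      have hnum : ‖∑ n ∈ Φ N, (((1 - w n : ℝ)) : ℂ) * a n‖ ≤ ∑ n ∈ Φ N, |1 - w n| := by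
        refine (norm_sum_le _ _).trans (Finset.sum_le_sum fun n _ => ?_)
        rw [norm_mul, Complex.norm_real, Real.norm_eq_abs]
        calc |1 - w n| * ‖a n‖ ≤ |1 - w n| * 1 :=
              mul_le_mul_of_nonneg_left (ha n) (abs_nonneg _)
          _ = |1 - w n| := mul_one _
      have hcs : (∑ n ∈ Φ N, |1 - w n|) / ((Φ N).card : ℝ) ≤ Real.sqrt (DD N) := by
        apply Real.le_sqrt_of_sq_le
        rw [div_pow, hDDdef]
        simp only
        have hcsq := sq_sum_le_card_mul_sum_sq (s := Φ N) (f := fun n => |1 - w n|)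
        simp only [sq_abs] at hcsq
        rw [div_le_div_iff₀ (by positivity) hc]
        calc (∑ n ∈ Φ N, |1 - w n|)^2 * ((Φ N).card : ℝ)
            ≤ (((Φ N).card : ℝ) * ∑ n ∈ Φ N, (1 - w n)^2) * ((Φ N).card : ℝ) :=
              mul_le_mul_of_nonneg_right hcsq hc.le
          _ = (∑ n ∈ Φ N, (1 - w n)^2) * ((Φ N).card : ℝ)^2 := by ring
      calc ‖∑ n ∈ Φ N, (((1 - w n : ℝ)) : ℂ) * a n‖ / ((Φ N).card : ℝ)
          ≤ (∑ n ∈ Φ N, |1 - w n|) / ((Φ N).card : ℝ) :=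
            (div_le_div_iff_of_pos_right hc).2 hnum
        _ ≤ Real.sqrt (DD N) := hcs
    -- error part
    have hB2 : ‖(1 / (L:ℂ)) * ∑ p ∈ B,
        ((∑ n ∈ (Φ N).filter fun n => p ∣ n, a n) / ((Φ N).card : ℂ)
          - (1 / (Zsqrtd.norm p : ℂ)) * avg (divSet (Φ N) p) (fun n => a (p * n)))‖
        ≤ eps N := by
      rw [norm_mul]
      have hnL : ‖(1 / (L:ℂ))‖ = 1 / L := by
        rw [norm_div, norm_one, Complex.norm_real, Real.norm_eq_abs, abs_of_pos hL]
      rw [hnL, heps]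
      simp only
      refine mul_le_mul_of_nonneg_left ?_ (by positivity)
      exact (norm_sum_le _ _).trans (Finset.sum_le_sum hA)
    rw [hmid]
    refine (norm_add_le _ _).trans ?_
    rw [add_comm (eps N)]
    exact add_le_add hB1 hB2
  -- Step 2: eps → 0
  have h2 : Tendsto eps atTop (nhds 0) := by
    have hsum : Tendsto (fun N => ∑ p ∈ B, |1/(Zsqrtd.norm p : ℝ) - dd p N|) atTop (nhds 0) := by
      have h0 : (0:ℝ) = ∑ p ∈ B, (0:ℝ) := by simp
      rw [h0]
      refine tendsto_finset_sum _ (fun p hp => ?_)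
      have hd := dvd_density Φ hΦ p (hB0 p hp)
      have := (tendsto_const_nhds (x := 1/(Zsqrtd.norm p : ℝ)) (f := atTop (α := ℕ))).sub hd
      rw [sub_self] at this
      simpa [hdd] using this.abs
    have := hsum.const_mul (1/L)
    simpa [heps] using this
  -- Step 3: DD → V
  have h3 : Tendsto DD atTop (nhds V) := by
    have hlcm : ∀ p ∈ B, ∀ q ∈ B, EuclideanDomain.lcm p q ≠ 0 := by
      intro p hp q hq h
      rcases EuclideanDomain.lcm_eq_zero_iff.mp h with h' | h'
      exacts [hB0 p hp h', hB0 q hq h']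
    have hexp : ∀ N, DD N = 1 - 2 * ((1/L) * ∑ p ∈ B, dd p N)
        + (1/L)^2 * ∑ p ∈ B, ∑ q ∈ B, dd (EuclideanDomain.lcm p q) N := by
      intro N
      have hc := (hcard N).ne'
      have hwsum : ∑ n ∈ Φ N, w n
          = (1/L) * ∑ p ∈ B, (((Φ N).filter fun n => p ∣ n).card : ℝ) := by
        simp only [hw]
        rw [← Finset.mul_sum]
        congr 1
        rw [Finset.sum_comm]
        exact Finset.sum_congr rfl fun p _ => by simp [Finset.sum_boole]
      have hw2sum : ∑ n ∈ Φ N, (w n)^2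
          = (1/L)^2 * ∑ p ∈ B, ∑ q ∈ B,
              (((Φ N).filter fun n => EuclideanDomain.lcm p q ∣ n).card : ℝ) := by
        simp only [hw, mul_pow]
        rw [← Finset.mul_sum]
        congr 1
        have hnn : ∀ n, (∑ p ∈ B, if p ∣ n then (1:ℝ) else 0)^2
            = ∑ p ∈ B, ∑ q ∈ B, if EuclideanDomain.lcm p q ∣ n then (1:ℝ) else 0 := by
          intro n
          rw [sq, Finset.sum_mul_sum]
          refine Finset.sum_congr rfl fun p _ => Finset.sum_congr rfl fun q _ => ?_
          by_cases h1 : p ∣ n <;> by_cases h2 : q ∣ n <;>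
            simp [h1, h2, EuclideanDomain.lcm_dvd_iff]
        simp only [hnn]
        rw [Finset.sum_comm]
        refine Finset.sum_congr rfl fun p _ => ?_
        rw [Finset.sum_comm]
        exact Finset.sum_congr rfl fun q _ => by simp [Finset.sum_boole]
      have hnum : ∑ n ∈ Φ N, (1 - w n)^2
          = ((Φ N).card : ℝ) - 2 * (∑ n ∈ Φ N, w n) + ∑ n ∈ Φ N, (w n)^2 := by
        have hring : ∀ n, (1 - w n)^2 = 1 - 2 * w n + (w n)^2 := fun n => by ring
        simp only [hring]
        rw [Finset.sum_add_distrib, Finset.sum_sub_distrib, Finset.sum_const, Finset.mul_sum]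
        simp
      have key : ∀ C X Y : ℝ, C ≠ 0 →
          (C - 2 * ((1/L) * X) + (1/L)^2 * Y) / C
            = 1 - 2 * ((1/L) * (X / C)) + (1/L)^2 * (Y / C) := by
        intro C X Y hC
        field_simp
      have hr1 : ∑ p ∈ B, dd p N
          = (∑ p ∈ B, (((Φ N).filter fun n => p ∣ n).card : ℝ)) / ((Φ N).card : ℝ) := by
        simp only [hdd]
        rw [Finset.sum_div]
      have hr2 : ∑ p ∈ B, ∑ q ∈ B, dd (EuclideanDomain.lcm p q) N
          = (∑ p ∈ B, ∑ q ∈ B,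
              (((Φ N).filter fun n => EuclideanDomain.lcm p q ∣ n).card : ℝ))
            / ((Φ N).card : ℝ) := by
        simp only [hdd]
        simp [Finset.sum_div]
      rw [hDDdef]
      simp only
      rw [hnum, hwsum, hw2sum, hr1, hr2]
      exact key _ _ _ hc
    have hlim : Tendsto (fun N => 1 - 2 * ((1/L) * ∑ p ∈ B, dd p N)
        + (1/L)^2 * ∑ p ∈ B, ∑ q ∈ B, dd (EuclideanDomain.lcm p q) N) atTop
        (nhds (1 - 2 * ((1/L) * ∑ p ∈ B, 1/(Zsqrtd.norm p : ℝ))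
          + (1/L)^2 * ∑ p ∈ B, ∑ q ∈ B,
              1/(Zsqrtd.norm (EuclideanDomain.lcm p q) : ℝ))) := by
      refine Tendsto.add (Tendsto.sub tendsto_const_nhds ?_) ?_
      · exact Tendsto.const_mul 2 (Tendsto.const_mul (1/L)
          (tendsto_finset_sum _ fun p hp => dvd_density Φ hΦ p (hB0 p hp)))
      · exact Tendsto.const_mul ((1/L)^2) (tendsto_finset_sum _ fun p hp =>
          tendsto_finset_sum _ fun q hq => dvd_density Φ hΦ _ (hlcm p hp q hq))
    have hval : 1 - 2 * ((1/L) * ∑ p ∈ B, 1/(Zsqrtd.norm p : ℝ))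
        + (1/L)^2 * ∑ p ∈ B, ∑ q ∈ B, 1/(Zsqrtd.norm (EuclideanDomain.lcm p q) : ℝ) = V := by
      have hLs : ∑ p ∈ B, 1/(Zsqrtd.norm p : ℝ) = L := by rw [hLdef]; rfl
      have hterm : ∑ p ∈ B, ∑ q ∈ B, 1/(Zsqrtd.norm (EuclideanDomain.lcm p q) : ℝ)
          = ∑ p ∈ B, ∑ q ∈ B, (Zsqrtd.norm (EuclideanDomain.gcd p q) : ℝ) /
              ((Zsqrtd.norm p : ℝ) * (Zsqrtd.norm q : ℝ)) := by
        refine Finset.sum_congr rfl fun p hp => Finset.sum_congr rfl fun q hq => ?_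
        have h1 := hNp _ (hlcm p hp q hq)
        have h2 := hNp p (hB0 p hp)
        have h3 := hNp q (hB0 q hq)
        have hmul : (Zsqrtd.norm (EuclideanDomain.gcd p q) : ℝ)
            * (Zsqrtd.norm (EuclideanDomain.lcm p q) : ℝ)
            = (Zsqrtd.norm p : ℝ) * (Zsqrtd.norm q : ℝ) := by
          rw [← Int.cast_mul, ← Zsqrtd.norm_mul, EuclideanDomain.gcd_mul_lcm,
            Zsqrtd.norm_mul, Int.cast_mul]
        rw [div_eq_div_iff h1.ne' (by positivity : (0:ℝ) < (Zsqrtd.norm p : ℝ) * (Zsqrtd.norm q : ℝ)).ne']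
        linarith [hmul]
      rw [hLs, hterm, hVdef]
      have hne := hL.ne'
      field_simp
      ring
    rw [← hval]
    exact Tendsto.congr (fun N => (hexp N).symm) hlim
  -- Assembly
  have hbnd : Tendsto (fun N => eps N + Real.sqrt (DD N)) atTop (nhds (Real.sqrt V)) := by
    have := h2.add h3.sqrt
    simpa using this
  calc Filter.limsup _ atTop ≤ Filter.limsup (fun N => eps N + Real.sqrt (DD N)) atTop := by
        refine Filter.limsup_le_limsup (Filter.Eventually.of_forall h1) ?_ ?_
        · exact Filter.isCoboundedUnder_le_of_le atTop (fun N => norm_nonneg _)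
        · exact hbnd.isBoundedUnder_le
    _ = Real.sqrt V := hbnd.limsup_eq
end

section
/- For any Følner sequence (Φ_N) in (𝔾, +) and any p, q ∈ 𝔾∖{0}, the density of the set of multiples of p satisfies lim_{N→∞} |Φ_N ∩ p𝔾|/|Φ_N| = 1/N(p), and lim_{N→∞} |Φ_N ∩ p𝔾 ∩ q𝔾|/|Φ_N| = N(gcd(p,q))/(N(p)N(q)). -/
open Finset Filter
open scoped Classical

noncomputable section
namespace FolnerAux

def gEquiv : GaussianInt ≃ₗ[ℤ] (Fin 2 → ℤ) where
  toFun z := ![z.re, z.im]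
  invFun f := ⟨f 0, f 1⟩
  left_inv z := by simp
  right_inv f := by funext i; fin_cases i <;> simp
  map_add' a b := by funext i; fin_cases i <;> simp
  map_smul' n z := by
    have h : n • z = (n : GaussianInt) * z := by rw [zsmul_eq_mul]
    funext i; fin_cases i <;> simp [h, Zsqrtd.re_smul, Zsqrtd.im_smul]

def gBasis : Module.Basis (Fin 2) ℤ GaussianInt := Module.Basis.ofEquivFun gEquiv

instance : Module.Free ℤ GaussianInt := Module.Free.of_basis gBasis
instance : Module.Finite ℤ GaussianInt := Module.Finite.of_basis gBasis

lemma algebraNorm_eq (z : GaussianInt) : Algebra.norm ℤ z = Zsqrtd.norm z := by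
  rw [Algebra.norm_eq_matrix_det gBasis, Matrix.det_fin_two]
  have hb0 : gBasis 0 = (⟨1, 0⟩ : GaussianInt) := by
    simp [gBasis, Module.Basis.coe_ofEquivFun, gEquiv]
  have hb1 : gBasis 1 = (⟨0, 1⟩ : GaussianInt) := by
    simp [gBasis, Module.Basis.coe_ofEquivFun, gEquiv]
  simp [Algebra.leftMulMatrix_eq_repr_mul, gBasis, Module.Basis.ofEquivFun_repr_apply, gEquiv,
    hb0, hb1, Zsqrtd.norm_def, Zsqrtd.re_mul, Zsqrtd.im_mul]

lemma natCard_quot (p : GaussianInt) :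
    Nat.card (GaussianInt ⧸ (Ideal.span {p} : Ideal GaussianInt).toAddSubgroup)
      = (Zsqrtd.norm p).natAbs := by
  have h1 : Nat.card (GaussianInt ⧸ (Ideal.span {p} : Ideal GaussianInt))
      = (Zsqrtd.norm p).natAbs := by
    rw [← algebraNorm_eq, ← Ideal.absNorm_span_singleton, Ideal.absNorm_apply,
      Submodule.cardQuot_apply]
  exact h1

lemma mk_out_eq {H : AddSubgroup GaussianInt} (c : GaussianInt ⧸ H) :
    QuotientAddGroup.mk (s := H) c.out = c := Quotient.out_eq c

lemma exists_T (H : AddSubgroup GaussianInt) [Fintype (GaussianInt ⧸ H)] :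
    ∃ T : Finset GaussianInt, T.card = Nat.card (GaussianInt ⧸ H) ∧
      ∀ n : GaussianInt, ∃! g, g ∈ T ∧ n - g ∈ H := by
  refine ⟨(Finset.univ : Finset (GaussianInt ⧸ H)).image Quotient.out, ?_, ?_⟩
  · rw [Finset.card_image_of_injective _ Quotient.out_injective, card_univ,
      Nat.card_eq_fintype_card]
    exact Fintype.card_congr (Equiv.refl _)
  · intro n
    refine ⟨(QuotientAddGroup.mk (s := H) n).out, ⟨mem_image.2 ⟨_, mem_univ _, rfl⟩, ?_⟩, ?_⟩
    · have h := mk_out_eq (QuotientAddGroup.mk (s := H) n)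
      have := (QuotientAddGroup.eq (s := H)).mp h
      simpa [sub_eq_add_neg, add_comm] using this
    · rintro g' ⟨hg'T, hg'⟩
      obtain ⟨c, _, rfl⟩ := mem_image.1 hg'T
      have h : QuotientAddGroup.mk (s := H) c.out = QuotientAddGroup.mk n := by
        rw [QuotientAddGroup.eq (s := H)]
        simpa [sub_eq_add_neg, add_comm] using hg'
      rw [mk_out_eq] at h
      rw [h]

lemma card_filter_le (s t : Finset GaussianInt) (P : GaussianInt → Prop) :
    (s.filter P).card ≤ (t.filter P).card + (symmDiff s t).card := by
  have hsub : s.filter P ⊆ t.filter P ∪ symmDiff s t := by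
    intro x hx
    simp only [mem_filter] at hx
    by_cases hxt : x ∈ t
    · exact mem_union_left _ (mem_filter.2 ⟨hxt, hx.2⟩)
    · exact mem_union_right _ (by simp [Finset.mem_symmDiff, hx.1, hxt])
  calc (s.filter P).card ≤ (t.filter P ∪ symmDiff s t).card := card_le_card hsub
    _ ≤ _ := card_union_le _ _

lemma folner_density (Φ : ℕ → Finset GaussianInt) (hΦ : IsFolner Φ)
    (H : AddSubgroup GaussianInt) (T : Finset GaussianInt)
    (hT : ∀ n : GaussianInt, ∃! g, g ∈ T ∧ n - g ∈ H) :
    Tendsto (fun N => (((Φ N).filter fun n => n ∈ H).card : ℝ) / (Φ N).card) atTop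
      (nhds (1 / (T.card : ℝ))) := by
  have hpos : ∀ N, 0 < ((Φ N).card : ℝ) := fun N => by
    exact_mod_cast card_pos.2 (hΦ.1 N)
  have hk : 0 < (T.card : ℝ) := by
    obtain ⟨g, hg, -⟩ := (hT 0).exists
    exact_mod_cast card_pos.2 ⟨g, hg⟩
  have hch : ∀ n : GaussianInt, ∃ g, g ∈ T ∧ n - g ∈ H := fun n => (hT n).exists
  set f : GaussianInt → GaussianInt := fun n => (hch n).choose with hf
  have hfT : ∀ n, f n ∈ T := fun n => (hch n).choose_spec.1
  have hfH : ∀ n, n - f n ∈ H := fun n => (hch n).choose_spec.2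
  have hfu : ∀ n g, g ∈ T → n - g ∈ H → f n = g := by
    intro n g hg hng
    exact ((hT n).unique ⟨hfT n, hfH n⟩ ⟨hg, hng⟩)
  have hsum : ∀ N, ∑ g ∈ T, ((Φ N).filter fun n => n - g ∈ H).card = (Φ N).card := by
    intro N
    rw [Finset.card_eq_sum_card_fiberwise (f := f) (t := T) (fun n _ => hfT n)]
    refine Finset.sum_congr rfl fun g hg => ?_
    congr 1
    apply Finset.filter_congr
    intro n _
    constructor
    · intro h; exact (hfu n g hg h) ▸ (by rw [hfu n g hg h])
    · intro h; rw [← h]; exact hfH n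
  have himg : ∀ (g : GaussianInt) (N : ℕ), ((Φ N).filter fun n => n - g ∈ H).card
      = (((Φ N).image fun n => n + (-g)).filter fun n => n ∈ H).card := by
    intro g N
    rw [Finset.filter_image, Finset.card_image_of_injective _ (add_left_injective (-g))]
    congr 1
  have hbound : ∀ (g : GaussianInt) (N : ℕ),
      |(((Φ N).filter fun n => n ∈ H).card : ℝ) - ((Φ N).filter fun n => n - g ∈ H).card|
        ≤ ((symmDiff ((Φ N).image fun n => n + (-g)) (Φ N)).card : ℝ) := by
    intro g N
    rw [himg g N, abs_sub_le_iff]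
    constructor
    · have h1 := card_filter_le (Φ N) ((Φ N).image fun n => n + (-g)) (· ∈ H)
      rw [symmDiff_comm] at h1
      rw [sub_le_iff_le_add, add_comm]
      exact_mod_cast h1
    · have h1 := card_filter_le ((Φ N).image fun n => n + (-g)) (Φ N) (· ∈ H)
      rw [sub_le_iff_le_add, add_comm]
      exact_mod_cast h1
  set k : ℝ := (T.card : ℝ) with hkdef
  have key : ∀ N, |(((Φ N).filter fun n => n ∈ H).card : ℝ) / (Φ N).card - 1 / k|
      ≤ (1 / k) * ∑ g ∈ T,
          ((symmDiff ((Φ N).image fun n => n + (-g)) (Φ N)).card : ℝ) / (Φ N).card := by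
    intro N
    set cH : ℝ := (((Φ N).filter fun n => n ∈ H).card : ℝ)
    set cΦ : ℝ := ((Φ N).card : ℝ) with hcΦdef
    have hcΦ := hpos N
    have e1 : k * cH - cΦ = ∑ g ∈ T, (cH - (((Φ N).filter fun n => n - g ∈ H).card : ℝ)) := by
      rw [Finset.sum_sub_distrib, Finset.sum_const, nsmul_eq_mul]
      have : ∑ g ∈ T, (((Φ N).filter fun n => n - g ∈ H).card : ℝ) = cΦ := by
        rw [hcΦdef]
        exact_mod_cast hsum N
      rw [this]
    have e2 : |k * cH - cΦ| ≤ ∑ g ∈ T,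
        ((symmDiff ((Φ N).image fun n => n + (-g)) (Φ N)).card : ℝ) := by
      rw [e1]
      refine (Finset.abs_sum_le_sum_abs _ _).trans ?_
      exact Finset.sum_le_sum fun g _ => hbound g N
    have e3 : cH / cΦ - 1 / k = (k * cH - cΦ) / (k * cΦ) := by
      have hc0 : cΦ ≠ 0 := ne_of_gt hcΦ
      rw [div_sub_div _ _ hc0 (ne_of_gt hk)]; ring
    rw [e3, abs_div, abs_of_pos (by positivity : (0:ℝ) < k * cΦ)]
    rw [div_le_iff₀ (by positivity : (0:ℝ) < k * cΦ)]
    calc |k * cH - cΦ| ≤ ∑ g ∈ T,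
        ((symmDiff ((Φ N).image fun n => n + (-g)) (Φ N)).card : ℝ) := e2
      _ = (1 / k * ∑ g ∈ T,
          ((symmDiff ((Φ N).image fun n => n + (-g)) (Φ N)).card : ℝ) / cΦ) * (k * cΦ) := by
          rw [← Finset.sum_div]
          have hc0 : cΦ ≠ 0 := ne_of_gt hcΦ
          have hk0 : k ≠ 0 := ne_of_gt hk
          rw [show ∀ S : ℝ, 1 / k * (S / cΦ) * (k * cΦ) = S * (k * k⁻¹) * (cΦ * cΦ⁻¹) from
            fun S => by ring, mul_inv_cancel₀ hk0, mul_inv_cancel₀ hc0]; ring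
  have hsum0 : Tendsto (fun N => ∑ g ∈ T,
      ((symmDiff ((Φ N).image fun n => n + (-g)) (Φ N)).card : ℝ) / (Φ N).card)
      atTop (nhds 0) := by
    have h0 : (0:ℝ) = ∑ _g ∈ T, (0:ℝ) := by simp
    rw [h0]
    exact tendsto_finset_sum T fun g _ => hΦ.2 (-g)
  have hg0 : Tendsto (fun N => (1 / k) * ∑ g ∈ T,
      ((symmDiff ((Φ N).image fun n => n + (-g)) (Φ N)).card : ℝ) / (Φ N).card)
      atTop (nhds 0) := by
    simpa using hsum0.const_mul (1 / k)
  have hdiff : Tendsto (fun N =>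
      (((Φ N).filter fun n => n ∈ H).card : ℝ) / (Φ N).card - 1 / k) atTop (nhds 0) := by
    apply squeeze_zero_norm _ hg0
    intro N
    simpa [Real.norm_eq_abs] using key N
  have := hdiff.add (tendsto_const_nhds (x := 1 / k))
  simpa using this

lemma norm_natAbs_cast (r : GaussianInt) :
    (((Zsqrtd.norm r).natAbs : ℝ)) = (Zsqrtd.norm r : ℝ) := by
  rw [Nat.cast_natAbs, abs_of_nonneg]
  exact_mod_cast Zsqrtd.norm_nonneg (by norm_num) r

lemma density_dvd (Φ : ℕ → Finset GaussianInt) (hΦ : IsFolner Φ)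
    (r : GaussianInt) (hr : r ≠ 0) :
    Tendsto (fun N => (((Φ N).filter fun n => r ∣ n).card : ℝ) / (Φ N).card) atTop
      (nhds (1 / (Zsqrtd.norm r : ℝ))) := by
  set H := (Ideal.span {r} : Ideal GaussianInt).toAddSubgroup with hH
  have hmem : ∀ n : GaussianInt, n ∈ H ↔ r ∣ n := fun n => by
    rw [hH, Submodule.mem_toAddSubgroup, Ideal.mem_span_singleton]
  have hcard : Nat.card (GaussianInt ⧸ H) = (Zsqrtd.norm r).natAbs := natCard_quot r
  have hne : Nat.card (GaussianInt ⧸ H) ≠ 0 := by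
    rw [hcard]
    simpa [Int.natAbs_eq_zero] using (Zsqrtd.norm_eq_zero_iff (by norm_num : (-1:ℤ) < 0) r).not.mpr hr
  have hfin : Finite (GaussianInt ⧸ H) := Nat.finite_of_card_ne_zero hne
  have : Fintype (GaussianInt ⧸ H) := Fintype.ofFinite _
  obtain ⟨T, hTcard, hTcover⟩ := exists_T H
  have hd := folner_density Φ hΦ H T hTcover
  rw [hTcard, hcard] at hd
  have hfilter : ∀ N : ℕ, ((Φ N).filter fun n => n ∈ H) = ((Φ N).filter fun n => r ∣ n) :=
    fun N => Finset.filter_congr fun n _ => hmem n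
  rw [norm_natAbs_cast r] at hd
  simpa only [hfilter] using hd

end FolnerAux
end

open FolnerAux in
theorem stmt_5 (Φ : ℕ → Finset GaussianInt) (hΦ : IsFolner Φ)
    (p q : GaussianInt) (hp : p ≠ 0) (hq : q ≠ 0) :
    Tendsto (fun N =>
        (((Φ N).filter fun n => p ∣ n).card : ℝ) / (Φ N).card) atTop
      (nhds (1 / (Zsqrtd.norm p : ℝ))) ∧
    Tendsto (fun N =>
        (((Φ N).filter fun n => p ∣ n ∧ q ∣ n).card : ℝ) / (Φ N).card) atTop
      (nhds ((Zsqrtd.norm (EuclideanDomain.gcd p q) : ℝ) /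
        ((Zsqrtd.norm p : ℝ) * (Zsqrtd.norm q : ℝ)))) := by
  constructor
  · exact density_dvd Φ hΦ p hp
  · set l := EuclideanDomain.lcm p q with hl
    have hgl : EuclideanDomain.gcd p q * l = p * q := EuclideanDomain.gcd_mul_lcm p q
    have hpq : p * q ≠ 0 := mul_ne_zero hp hq
    have hlne : l ≠ 0 := by
      intro h
      rw [h, mul_zero] at hgl
      exact hpq hgl.symm
    have hd := density_dvd Φ hΦ l hlne
    have hfe : ∀ N : ℕ, ((Φ N).filter fun n => p ∣ n ∧ q ∣ n)
        = ((Φ N).filter fun n => l ∣ n) := by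
      intro N
      apply Finset.filter_congr
      intro n _
      constructor
      · rintro ⟨h1, h2⟩; exact EuclideanDomain.lcm_dvd h1 h2
      · intro h
        exact ⟨(EuclideanDomain.dvd_lcm_left p q).trans h,
          (EuclideanDomain.dvd_lcm_right p q).trans h⟩
    have hnorm0 : ∀ z : GaussianInt, z ≠ 0 → (Zsqrtd.norm z : ℝ) ≠ 0 := by
      intro z hz
      exact_mod_cast (Zsqrtd.norm_eq_zero_iff (by norm_num : (-1:ℤ) < 0) z).not.mpr hz
    have hval : (1 : ℝ) / (Zsqrtd.norm l : ℝ)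
        = (Zsqrtd.norm (EuclideanDomain.gcd p q) : ℝ) /
          ((Zsqrtd.norm p : ℝ) * (Zsqrtd.norm q : ℝ)) := by
      have hmul : (Zsqrtd.norm (EuclideanDomain.gcd p q) : ℝ) * (Zsqrtd.norm l : ℝ)
          = (Zsqrtd.norm p : ℝ) * (Zsqrtd.norm q : ℝ) := by
        have := congrArg Zsqrtd.norm hgl
        rw [Zsqrtd.norm_mul, Zsqrtd.norm_mul] at this
        exact_mod_cast this
      have h1 := hnorm0 p hp
      have h2 := hnorm0 q hq
      have h3 := hnorm0 l hlne
      rw [div_eq_div_iff h3 (mul_ne_zero h1 h2)]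
      linarith [hmul]
    rw [hval] at hd
    simpa only [hfe] using hd
end

section
/- Let U ⊂ ℂ be a bounded Lebesgue-measurable set whose boundary has Lebesgue measure zero (i.e., U is Jordan measurable). Then lim_{t→∞} |{n ∈ 𝔾∖{0} : n ∈ tU}| / t² = m(U), where m denotes Lebesgue measure on ℂ. -/
open Filter MeasureTheory Metric Set
open scoped Pointwise ENNReal NNReal Topology

noncomputable section

/-- The half-open unit square based at a Gaussian integer. -/
def gsq (n : GaussianInt) : Set ℂ :=
  {z : ℂ | (n.re : ℝ) ≤ z.re ∧ z.re < (n.re : ℝ) + 1 ∧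
    (n.im : ℝ) ≤ z.im ∧ z.im < (n.im : ℝ) + 1}

lemma gsq_eq (n : GaussianInt) : gsq n =
    Complex.measurableEquivRealProd ⁻¹'
      (Set.Ico (n.re : ℝ) ((n.re : ℝ) + 1) ×ˢ Set.Ico (n.im : ℝ) ((n.im : ℝ) + 1)) := by
  ext z
  simp [gsq, Complex.measurableEquivRealProd, Complex.equivRealProd, and_assoc]

lemma gsq_measurable (n : GaussianInt) : MeasurableSet (gsq n) := by
  rw [gsq_eq]
  exact Complex.measurableEquivRealProd.measurable (measurableSet_Ico.prod measurableSet_Ico)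

lemma gsq_volume (n : GaussianInt) : volume (gsq n) = 1 := by
  rw [gsq_eq, Complex.volume_preserving_equiv_real_prod.measure_preimage
    (measurableSet_Ico.prod measurableSet_Ico).nullMeasurableSet]
  rw [Measure.volume_eq_prod, Measure.prod_prod, Real.volume_Ico, Real.volume_Ico]
  simp

lemma gsq_existsUnique (z : ℂ) : ∃! n : GaussianInt, z ∈ gsq n := by
  refine ⟨⟨⌊z.re⌋, ⌊z.im⌋⟩, ⟨?_, ?_, ?_, ?_⟩, ?_⟩
  · exact Int.floor_le _
  · exact Int.lt_floor_add_one _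
  · exact Int.floor_le _
  · exact Int.lt_floor_add_one _
  · rintro ⟨a, b⟩ ⟨h1, h2, h3, h4⟩
    have ha : ⌊z.re⌋ = a := Int.floor_eq_iff.mpr ⟨h1, h2⟩
    have hb : ⌊z.im⌋ = b := Int.floor_eq_iff.mpr ⟨h3, h4⟩
    simp [ha, hb]

lemma gsq_dist {n : GaussianInt} {z : ℂ} (hz : z ∈ gsq n) : dist z (n : ℂ) < 2 := by
  obtain ⟨h1, h2, h3, h4⟩ := hz
  rw [GaussianInt.intCast_re] at h1 h2
  rw [GaussianInt.intCast_im] at h3 h4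
  rw [Complex.dist_eq]
  refine lt_of_le_of_lt (Complex.norm_le_abs_re_add_abs_im _) ?_
  rw [Complex.sub_re, Complex.sub_im]
  have e1 : |z.re - (n : ℂ).re| < 1 := abs_lt.2 ⟨by linarith, by linarith⟩
  have e2 : |z.im - (n : ℂ).im| < 1 := abs_lt.2 ⟨by linarith, by linarith⟩
  linarith


lemma gsq_disjoint : Pairwise (Function.onFun Disjoint gsq) := by
  intro m n hmn
  rw [Function.onFun, Set.disjoint_left]
  intro z hm hn
  exact hmn ((gsq_existsUnique z).unique hm hn)

lemma count_eq_volume {P : Set GaussianInt} (hP : P.Finite) :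
    volume (⋃ n ∈ P, gsq n) = P.ncard := by
  conv_lhs => rw [← hP.coe_toFinset]
  rw [Finset.set_biUnion_coe]
  rw [measure_biUnion_finset (gsq_disjoint.set_pairwise _) fun n _ => gsq_measurable n]
  simp [gsq_volume, Set.ncard_eq_toFinset_card P hP]

lemma lattice_finite {s : Set ℂ} (hs : Bornology.IsBounded s) :
    {n : GaussianInt | (n : ℂ) ∈ s}.Finite := by
  obtain ⟨R, hR⟩ := hs.subset_closedBall 0
  have h : {n : GaussianInt | (n : ℂ) ∈ s} ⊆
      (fun n : GaussianInt => (n.re, n.im)) ⁻¹'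
        (Set.Icc (-⌈R⌉) ⌈R⌉ ×ˢ Set.Icc (-⌈R⌉) ⌈R⌉) := by
    intro n hn
    have hb : ‖(n : ℂ)‖ ≤ R := by
      have := hR hn; simpa [Complex.dist_eq] using this
    have hre : |((n.re : ℤ) : ℝ)| ≤ R := by
      rw [GaussianInt.intCast_re]
      exact (Complex.abs_re_le_norm _).trans hb
    have him : |((n.im : ℤ) : ℝ)| ≤ R := by
      rw [GaussianInt.intCast_im]
      exact (Complex.abs_im_le_norm _).trans hb
    have h1 : |n.re| ≤ ⌈R⌉ := by exact_mod_cast hre.trans (Int.le_ceil R)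
    have h2 : |n.im| ≤ ⌈R⌉ := by exact_mod_cast him.trans (Int.le_ceil R)
    simp only [Set.mem_preimage, Set.mem_prod, Set.mem_Icc]
    exact ⟨abs_le.mp h1, abs_le.mp h2⟩
  refine Set.Finite.subset (Set.Finite.preimage ?_ ((Set.finite_Icc _ _).prod (Set.finite_Icc _ _))) h
  intro a _ b _ hab
  cases a; cases b; simp_all

lemma smul_compl {t : ℝ} (ht : t ≠ 0) (s : Set ℂ) : (t • s)ᶜ = t • sᶜ := by
  ext x
  simp only [Set.mem_compl_iff, Set.mem_smul_set_iff_inv_smul_mem₀ ht]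

lemma smul_cthickening {t δ : ℝ} (ht : 0 < t) (s : Set ℂ) :
    cthickening (t * δ) (t • s) = t • cthickening δ s := by
  ext x
  rw [Set.mem_smul_set_iff_inv_smul_mem₀ ht.ne', mem_cthickening_iff, mem_cthickening_iff]
  have key : Metric.infEDist x (t • s) = ‖t‖₊ • Metric.infEDist (t⁻¹ • x) s := by
    rw [← infEDist_smul₀ ht.ne' s (t⁻¹ • x), smul_inv_smul₀ ht.ne']
  rw [key, ENNReal.smul_def, smul_eq_mul,
    show (ENNReal.ofReal (t * δ)) = (‖t‖₊ : ℝ≥0∞) * ENNReal.ofReal δ by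
      rw [ENNReal.ofReal_mul ht.le, ← enorm_eq_nnnorm, Real.enorm_eq_ofReal ht.le]]
  rw [ENNReal.mul_le_mul_iff_right (by simpa using ht.ne') ENNReal.coe_ne_top]

lemma smul_thickening {t δ : ℝ} (ht : 0 < t) (s : Set ℂ) :
    thickening (t * δ) (t • s) = t • thickening δ s := by
  ext x
  rw [Set.mem_smul_set_iff_inv_smul_mem₀ ht.ne', Metric.mem_thickening_iff_infEdist_lt,
    Metric.mem_thickening_iff_infEdist_lt]
  have key : Metric.infEDist x (t • s) = ‖t‖₊ • Metric.infEDist (t⁻¹ • x) s := by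
    rw [← infEDist_smul₀ ht.ne' s (t⁻¹ • x), smul_inv_smul₀ ht.ne']
  rw [key, ENNReal.smul_def, smul_eq_mul,
    show (ENNReal.ofReal (t * δ)) = (‖t‖₊ : ℝ≥0∞) * ENNReal.ofReal δ by
      rw [ENNReal.ofReal_mul ht.le, ← enorm_eq_nnnorm, Real.enorm_eq_ofReal ht.le]]
  rw [ENNReal.mul_lt_mul_iff_right (by simpa using ht.ne') ENNReal.coe_ne_top]

lemma vol_smul (t : ℝ) (s : Set ℂ) :
    volume (t • s) = ENNReal.ofReal (t ^ 2) * volume s := by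
  rw [Measure.addHaar_smul volume, Complex.finrank_real_complex, abs_pow, sq_abs]


set_option maxHeartbeats 1000000 in
theorem stmt_6 (U : Set ℂ) (hbd : Bornology.IsBounded U) (hmeas : MeasurableSet U)
    (hJordan : volume (frontier U) = 0) :
    Tendsto (fun t : ℝ =>
        (Set.ncard {n : GaussianInt | n ≠ 0 ∧ (n : ℂ) ∈ t • U} : ℝ) / t ^ 2)
      atTop (nhds (volume U).toReal) := by
  set c := (volume U).toReal with hc
  have hfinU : volume U ≠ ⊤ := hbd.measure_lt_top.ne
  have T2 : Tendsto (fun t : ℝ => 2 / t) atTop (𝓝 0) :=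
    tendsto_const_nhds.div_atTop tendsto_id
  -- upper function
  have hclosure : volume (closure U) = volume U := by
    refine le_antisymm ?_ (measure_mono subset_closure)
    rw [closure_eq_self_union_frontier]
    exact (measure_union_le _ _).trans (by rw [hJordan, add_zero])
  have hg : Tendsto (fun t : ℝ => volume (cthickening (2 / t) U)) atTop (𝓝 (volume U)) := by
    have := (tendsto_measure_cthickening
      ⟨1, one_pos, (show volume (Metric.cthickening 1 U) < ⊤ from (hbd.cthickening (δ := 1)).measure_lt_top).ne⟩).comp T2
    rwa [hclosure] at this
  have hgR : Tendsto (fun t : ℝ => (volume (cthickening (2 / t) U)).toReal) atTop (𝓝 c) :=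
    (ENNReal.tendsto_toReal hfinU).comp hg
  -- lower function
  set ν := volume.restrict U with hν
  haveI : IsFiniteMeasure ν := by
    constructor
    rw [hν, Measure.restrict_apply_univ]
    exact hbd.measure_lt_top
  have hν0 : ν (closure Uᶜ) = 0 := by
    rw [Measure.restrict_apply isClosed_closure.measurableSet]
    refine measure_mono_null ?_ hJordan
    rw [closure_compl]
    exact fun x hx => ⟨subset_closure hx.2, hx.1⟩
  have T4 : Tendsto (fun t : ℝ => 2 / t) atTop (𝓝[>] 0) := by
    refine tendsto_nhdsWithin_of_tendsto_nhds_of_eventually_within _ T2 ?_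
    filter_upwards [eventually_gt_atTop (0 : ℝ)] with t ht
    exact div_pos two_pos ht
  have hA : Tendsto (fun t : ℝ => ν (thickening (2 / t) Uᶜ)) atTop (𝓝 0) := by
    have := (tendsto_measure_thickening (μ := ν) (s := Uᶜ)
      ⟨1, one_pos, measure_ne_top ν _⟩).comp T4
    rwa [hν0] at this
  have hAR : Tendsto (fun t : ℝ => (ν (thickening (2 / t) Uᶜ)).toReal) atTop (𝓝 0) := by
    have := (ENNReal.tendsto_toReal (by simp)).comp hA
    simpa [Function.comp_def] using this
  have heq : ∀ t : ℝ, (volume (U \ thickening (2 / t) Uᶜ)).toReal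
      = c - (ν (thickening (2 / t) Uᶜ)).toReal := by
    intro t
    have hmeasT : MeasurableSet (thickening (2 / t) Uᶜ) := isOpen_thickening.measurableSet
    have e1 : volume (U \ thickening (2 / t) Uᶜ) = ν ((thickening (2 / t) Uᶜ)ᶜ) := by
      rw [hν, Measure.restrict_apply hmeasT.compl, Set.inter_comm, ← Set.diff_eq]
    have hle : ν (thickening (2 / t) Uᶜ) ≤ volume U := by
      have : ν (thickening (2 / t) Uᶜ) ≤ ν Set.univ := measure_mono (Set.subset_univ _)
      rwa [Measure.restrict_apply_univ] at this
    rw [e1, measure_compl hmeasT (measure_ne_top ν _), Measure.restrict_apply_univ,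
      ENNReal.toReal_sub_of_le hle hfinU]
  have hfR : Tendsto (fun t : ℝ => (volume (U \ thickening (2 / t) Uᶜ)).toReal)
      atTop (𝓝 c) := by
    simp_rw [heq]
    have := tendsto_const_nhds (x := c) (f := atTop (α := ℝ)) |>.sub hAR
    simpa using this
  have hinv : Tendsto (fun t : ℝ => 1 / t ^ 2) atTop (𝓝 0) := by
    have h : Tendsto (fun t : ℝ => t ^ 2) atTop atTop := tendsto_pow_atTop two_ne_zero
    simpa [one_div, Pi.inv_def] using h.inv_tendsto_atTop
  have hlowR : Tendsto (fun t : ℝ =>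
      (volume (U \ thickening (2 / t) Uᶜ)).toReal - 1 / t ^ 2) atTop (𝓝 c) := by
    have := hfR.sub hinv
    simpa using this
  -- eventual bounds
  have hbounds : ∀ᶠ t : ℝ in atTop,
      (volume (U \ thickening (2 / t) Uᶜ)).toReal - 1 / t ^ 2
        ≤ (Set.ncard {n : GaussianInt | n ≠ 0 ∧ (n : ℂ) ∈ t • U} : ℝ) / t ^ 2
      ∧ (Set.ncard {n : GaussianInt | n ≠ 0 ∧ (n : ℂ) ∈ t • U} : ℝ) / t ^ 2
        ≤ (volume (cthickening (2 / t) U)).toReal := by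
    filter_upwards [eventually_ge_atTop (1 : ℝ)] with t ht
    have ht0 : (0 : ℝ) < t := zero_lt_one.trans_le ht
    have ht2 : (0 : ℝ) < t ^ 2 := by positivity
    have h2t : t * (2 / t) = 2 := by field_simp
    set P : Set GaussianInt := {n | (n : ℂ) ∈ t • U} with hPdef
    have hPfin : P.Finite := lattice_finite (hbd.smul₀ t)
    set Q : Set GaussianInt := {n : GaussianInt | n ≠ 0 ∧ (n : ℂ) ∈ t • U} with hQdef
    have hsub : Q ⊆ P := fun n hn => hn.2
    have hNle : Q.ncard ≤ P.ncard := Set.ncard_le_ncard hsub hPfin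
    have hPle : P.ncard ≤ Q.ncard + 1 := by
      have hins : P ⊆ insert 0 Q := by
        intro n hn
        by_cases h : n = 0
        · exact h ▸ Set.mem_insert _ _
        · exact Set.mem_insert_of_mem _ ⟨h, hn⟩
      calc P.ncard ≤ (insert (0 : GaussianInt) Q).ncard :=
            Set.ncard_le_ncard hins ((hPfin.subset hsub).insert 0)
        _ ≤ Q.ncard + 1 := Set.ncard_insert_le _ _
    -- upper bound
    have hcup : (⋃ n ∈ P, gsq n) ⊆ cthickening 2 (t • U) := by
      intro z hz
      simp only [Set.mem_iUnion] at hz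
      obtain ⟨n, hn, hzn⟩ := hz
      exact mem_cthickening_of_dist_le z (n : ℂ) 2 _ hn (gsq_dist hzn).le
    have hupper : (P.ncard : ℝ≥0∞) ≤ volume (cthickening 2 (t • U)) := by
      rw [← count_eq_volume hPfin]
      exact measure_mono hcup
    -- lower bound
    have hlsub : (t • U) \ thickening 2 ((t • U)ᶜ) ⊆ ⋃ n ∈ P, gsq n := by
      intro z hz
      obtain ⟨n, hn, -⟩ := gsq_existsUnique z
      have hmem : (n : ℂ) ∈ t • U := by
        by_contra h
        exact hz.2 (Metric.mem_thickening_iff.mpr ⟨(n : ℂ), h, gsq_dist hn⟩)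
      exact Set.mem_iUnion₂.mpr ⟨n, hmem, hn⟩
    have hlower : volume ((t • U) \ thickening 2 ((t • U)ᶜ)) ≤ (P.ncard : ℝ≥0∞) := by
      rw [← count_eq_volume hPfin]
      exact measure_mono hlsub
    -- rewrite via scaling
    have eup : volume (cthickening 2 (t • U))
        = ENNReal.ofReal (t ^ 2) * volume (cthickening (2 / t) U) := by
      rw [← h2t, smul_cthickening ht0, vol_smul, mul_div_cancel_left₀ _ ht0.ne']
    have elow : volume ((t • U) \ thickening 2 ((t • U)ᶜ))
        = ENNReal.ofReal (t ^ 2) * volume (U \ thickening (2 / t) Uᶜ) := by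
      rw [smul_compl ht0.ne', ← h2t, smul_thickening ht0, ← Set.smul_set_sdiff₀ ht0.ne',
        vol_smul, mul_div_cancel_left₀ _ ht0.ne']
    have hV2fin : volume (cthickening (2 / t) U) ≠ ⊤ := ((hbd.cthickening (δ := 2 / t)).measure_lt_top).ne
    have hV1fin : volume (U \ thickening (2 / t) Uᶜ) ≠ ⊤ :=
      ((measure_mono Set.diff_subset).trans_lt hbd.measure_lt_top).ne
    set a : ℝ := (volume (U \ thickening (2 / t) Uᶜ)).toReal with ha
    set b : ℝ := (volume (cthickening (2 / t) U)).toReal with hb2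
    have ha0 : 0 ≤ a := ENNReal.toReal_nonneg
    have ineq1 : t ^ 2 * a ≤ (P.ncard : ℝ) := by
      have := ENNReal.toReal_mono (by exact_mod_cast ENNReal.natCast_ne_top P.ncard) (elow ▸ hlower)
      rwa [ENNReal.toReal_mul, ENNReal.toReal_ofReal ht2.le, ENNReal.toReal_natCast] at this
    have ineq2 : (P.ncard : ℝ) ≤ t ^ 2 * b := by
      have := ENNReal.toReal_mono (by rw [eup]; exact ENNReal.mul_ne_top ENNReal.ofReal_ne_top hV2fin) hupper
      rwa [eup, ENNReal.toReal_mul, ENNReal.toReal_ofReal ht2.le, ENNReal.toReal_natCast] at this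
    have hNQ : (Q.ncard : ℝ) ≤ (P.ncard : ℝ) := by exact_mod_cast hNle
    have hPQ : (P.ncard : ℝ) ≤ (Q.ncard : ℝ) + 1 := by exact_mod_cast hPle
    constructor
    · have h1 : a * t ^ 2 - 1 ≤ (Q.ncard : ℝ) := by nlinarith
      calc a - 1 / t ^ 2 = (a * t ^ 2 - 1) / t ^ 2 := by field_simp
        _ ≤ (Q.ncard : ℝ) / t ^ 2 := by gcongr
    · rw [div_le_iff₀ ht2]
      nlinarith
  exact tendsto_of_tendsto_of_tendsto_of_le_of_le' hlowR hgR
    (hbounds.mono fun t h => h.1) (hbounds.mono fun t h => h.2)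

end
end

section
/- Let f : 𝔾∖{0} → ℂ be a completely multiplicative function with |f(n)| ≤ 1 for all n, and suppose the set of arguments {Arg(f(p)) : p ∈ 𝒫₁} is finite, where 𝒫₁ is the set of Gaussian primes in the first quadrant. Then the infinite product P(f) = ∏_{p∈𝒫₁} (N(p) − 1)/(N(p) − f(p)) converges, |P(f)| ≤ 1, and P(f) = 0 if and only if ∑_{p∈𝒫₁} |1 − f(p)|/N(p) = ∞. -/
open Finset Filter
open scoped Classical

/-- The set of Gaussian primes in the (closed-open) first quadrant. -/
def FirstQuadPrime (p : GaussianInt) : Prop :=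
  Prime p ∧ 0 < p.re ∧ 0 ≤ p.im

/-- The finset of first-quadrant Gaussian primes of norm at most `M`. -/
noncomputable def P1box (M : ℕ) : Finset GaussianInt :=
  (((Finset.Icc (-(M : ℤ)) (M : ℤ)) ×ˢ (Finset.Icc (-(M : ℤ)) (M : ℤ))).image
      fun ab => (⟨ab.1, ab.2⟩ : GaussianInt)).filter
    fun p => FirstQuadPrime p ∧ Zsqrtd.norm p ≤ (M : ℤ)

lemma stmt7_norm_two_le {p : GaussianInt} (hp : FirstQuadPrime p) : 2 ≤ Zsqrtd.norm p := by
  have h0 : p ≠ 0 := hp.1.ne_zero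
  have h1 : 0 < Zsqrtd.norm p := GaussianInt.norm_pos.2 h0
  by_contra h
  push_neg at h
  have h2 : Zsqrtd.norm p = 1 := by omega
  exact hp.1.not_unit ((Zsqrtd.norm_eq_one_iff' (by norm_num) p).1 h2)

lemma stmt7_norm_expand (p : GaussianInt) : Zsqrtd.norm p = p.re * p.re + p.im * p.im := by
  simp [Zsqrtd.norm]

lemma stmt7_mem_P1box {p : GaussianInt} {M : ℕ} (hp : FirstQuadPrime p)
    (hM : Zsqrtd.norm p ≤ (M : ℤ)) : p ∈ P1box M := by
  have hre : 0 < p.re := hp.2.1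
  have him : 0 ≤ p.im := hp.2.2
  have hn := stmt7_norm_expand p
  have h1 : p.re ≤ (M : ℤ) := by nlinarith
  have h2 : p.im ≤ (M : ℤ) := by nlinarith
  simp only [P1box, Finset.mem_filter, Finset.mem_image, Finset.mem_product, Finset.mem_Icc,
    Prod.exists]
  exact ⟨⟨p.re, p.im, ⟨⟨by omega, h1⟩, ⟨by omega, h2⟩⟩, rfl⟩, hp, hM⟩

lemma stmt7_P1box_mono : Monotone P1box := by
  intro a b hab p hp
  have hab' : (a : ℤ) ≤ b := by exact_mod_cast hab
  simp only [P1box, Finset.mem_filter, Finset.mem_image, Finset.mem_product, Finset.mem_Icc,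
    Prod.exists] at hp ⊢
  obtain ⟨⟨x, y, ⟨⟨hx1, hx2⟩, hy1, hy2⟩, rfl⟩, hq, hnorm⟩ := hp
  exact ⟨⟨x, y, ⟨⟨by omega, by omega⟩, by omega, by omega⟩, rfl⟩, hq, hnorm.trans hab'⟩

lemma stmt7_mem_P1box_prime {p : GaussianInt} {M : ℕ} (h : p ∈ P1box M) : FirstQuadPrime p :=
  (Finset.mem_filter.1 h).2.1

lemma stmt7_one_add_sum_le_prod {ι : Type*} (s : Finset ι) (y : ι → ℝ) (hy : ∀ i ∈ s, 0 ≤ y i) :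
    1 + ∑ i ∈ s, y i ≤ ∏ i ∈ s, (1 + y i) := by
  induction s using Finset.cons_induction with
  | empty => simp
  | cons a s ha ih =>
    rw [Finset.sum_cons, Finset.prod_cons]
    have h1 : 0 ≤ y a := hy a (Finset.mem_cons_self a s)
    have h2 : 1 + ∑ i ∈ s, y i ≤ ∏ i ∈ s, (1 + y i) :=
      ih fun i hi => hy i (Finset.mem_cons_of_mem hi)
    have h3 : 0 ≤ ∑ i ∈ s, y i := Finset.sum_nonneg fun i hi => hy i (Finset.mem_cons_of_mem hi)
    nlinarith

lemma stmt7_exists_c (f : GaussianInt → ℂ)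
    (hbd : ∀ n : GaussianInt, n ≠ 0 → ‖f n‖ ≤ 1)
    (hArg : (Complex.arg '' (f '' {p : GaussianInt | FirstQuadPrime p})).Finite) :
    ∃ c : ℝ, 0 < c ∧ c ≤ 1 ∧ ∀ p, FirstQuadPrime p → c * ‖1 - f p‖ ≤ 1 - (f p).re := by
  classical
  set T : Finset ℝ := hArg.toFinset.filter (fun θ => θ ≠ 0) with hT
  have hTpos : ∀ θ ∈ T, 0 < 1 - Real.cos θ := by
    intro θ hθ
    rw [hT, Finset.mem_filter, Set.Finite.mem_toFinset] at hθ
    obtain ⟨hθS, hθ0⟩ := hθ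
    obtain ⟨z, hz, rfl⟩ := hθS
    have h1 : Real.cos (Complex.arg z) ≤ 1 := Real.cos_le_one _
    rcases lt_or_eq_of_le h1 with h | h
    · linarith
    · exfalso
      obtain ⟨n, hn⟩ := (Real.cos_eq_one_iff _).1 h
      have hpi : 0 < Real.pi := Real.pi_pos
      have h2 : -Real.pi < Complex.arg z := Complex.neg_pi_lt_arg z
      have h3 : Complex.arg z ≤ Real.pi := Complex.arg_le_pi z
      have hn0 : n = 0 := by
        rcases lt_trichotomy n 0 with hlt | he | hgt
        · have hn1 : n ≤ -1 := by linarith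
          have : (n : ℝ) ≤ -1 := by exact_mod_cast hn1
          nlinarith
        · exact he
        · have : (1 : ℝ) ≤ (n : ℝ) := by exact_mod_cast hgt
          nlinarith
      apply hθ0
      rw [← hn, hn0]
      simp
  by_cases hTne : T.Nonempty
  case neg =>
    refine ⟨1/2, by norm_num, by norm_num, ?_⟩
    intro p hp
    have harg : Complex.arg (f p) = 0 := by
      by_contra h
      exact hTne ⟨Complex.arg (f p), by
        rw [hT, Finset.mem_filter, Set.Finite.mem_toFinset]
        exact ⟨⟨f p, ⟨p, hp, rfl⟩, rfl⟩, h⟩⟩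
    obtain ⟨hre, him⟩ := Complex.arg_eq_zero_iff.1 harg
    have hre1 : (f p).re ≤ 1 := by
      have h1 := hbd p hp.1.ne_zero
      have h2 := Complex.abs_re_le_norm (f p)
      have : |(f p).re| ≤ 1 := by linarith
      exact (abs_le.1 this).2
    have he : (1 : ℂ) - f p = ((1 - (f p).re : ℝ) : ℂ) := by
      apply Complex.ext <;> simp [him]
    rw [he, Complex.norm_real, Real.norm_eq_abs, abs_of_nonneg (by linarith)]
    nlinarith
  case pos =>
    set m : ℝ := T.inf' hTne (fun θ => 1 - Real.cos θ) with hm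
    have hm0 : 0 < m := by
      rw [hm, Finset.lt_inf'_iff]
      exact hTpos
    refine ⟨(1/2) * min 1 m, by positivity, ?_, ?_⟩
    · have : min 1 m ≤ 1 := min_le_left _ _
      linarith
    intro p hp
    have hp0 : p ≠ 0 := hp.1.ne_zero
    have hfb : ‖f p‖ ≤ 1 := hbd p hp0
    have hre1 : (f p).re ≤ 1 := by
      have h2 := Complex.abs_re_le_norm (f p)
      have : |(f p).re| ≤ 1 := by linarith
      exact (abs_le.1 this).2
    have hnrm2 : ‖1 - f p‖ ≤ 2 := by
      calc ‖(1 : ℂ) - f p‖ ≤ ‖(1:ℂ)‖ + ‖f p‖ := norm_sub_le _ _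
      _ ≤ 2 := by rw [norm_one]; linarith
    by_cases harg : Complex.arg (f p) = 0
    · obtain ⟨hre, him⟩ := Complex.arg_eq_zero_iff.1 harg
      have he : (1 : ℂ) - f p = ((1 - (f p).re : ℝ) : ℂ) := by
        apply Complex.ext <;> simp [him]
      rw [he, Complex.norm_real, Real.norm_eq_abs, abs_of_nonneg (by linarith)]
      have h1 : (1/2) * min 1 m ≤ 1 := by
        have h2 : min 1 m ≤ 1 := min_le_left _ _
        have h3 : 0 ≤ min 1 m := le_min (by norm_num) hm0.le
        linarith
      nlinarith [le_min (zero_le_one.trans_eq rfl) hm0.le]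
    · have hf0 : f p ≠ 0 := by
        intro h; apply harg; rw [h]; exact Complex.arg_zero
      have hmem : Complex.arg (f p) ∈ T := by
        rw [hT, Finset.mem_filter, Set.Finite.mem_toFinset]
        exact ⟨⟨f p, ⟨p, hp, rfl⟩, rfl⟩, harg⟩
      have hmle : m ≤ 1 - Real.cos (Complex.arg (f p)) := Finset.inf'_le _ hmem
      have hreeq : (f p).re = ‖f p‖ * Real.cos (Complex.arg (f p)) := by
        rw [Complex.cos_arg hf0]
        rw [mul_div_assoc']
        rw [mul_comm, mul_div_assoc, div_self (norm_ne_zero_iff.mpr hf0), mul_one]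
      have habs1 : ‖f p‖ ≤ 1 := hfb
      have habs0 : 0 ≤ ‖f p‖ := norm_nonneg _
      have hkey : min 1 m ≤ 1 - (f p).re := by
        rcases le_or_gt 0 (Real.cos (Complex.arg (f p))) with hcos | hcos
        · have h4 : (f p).re ≤ Real.cos (Complex.arg (f p)) := by
            rw [hreeq]; nlinarith
          have h5 : 1 - Real.cos (Complex.arg (f p)) ≤ 1 - (f p).re := by linarith
          exact le_trans (min_le_right _ _) (le_trans hmle h5)
        · have h4 : (f p).re ≤ 0 := by rw [hreeq]; nlinarith
          exact le_trans (min_le_left _ _) (by linarith)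
      have hmin0 : 0 ≤ min 1 m := le_min (by norm_num) hm0.le
      nlinarith

set_option maxHeartbeats 1000000 in
theorem stmt_7 (f : GaussianInt → ℂ)
    (hmul : ∀ m n : GaussianInt, m ≠ 0 → n ≠ 0 → f (m * n) = f m * f n)
    (hbd : ∀ n : GaussianInt, n ≠ 0 → ‖f n‖ ≤ 1)
    (hArg : (Complex.arg '' (f '' {p : GaussianInt | FirstQuadPrime p})).Finite) :
    ∃ L : ℂ,
      Tendsto (fun M : ℕ =>
          ∏ p ∈ P1box M, ((Zsqrtd.norm p : ℂ) - 1) / ((Zsqrtd.norm p : ℂ) - f p))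
        atTop (nhds L) ∧
      ‖L‖ ≤ 1 ∧
      (L = 0 ↔
        ¬ Summable fun p : {p : GaussianInt // FirstQuadPrime p} =>
          ‖1 - f p.1‖ / (Zsqrtd.norm p.1 : ℝ)) := by
  classical
  obtain ⟨c, hc0, hc1, hc2⟩ := stmt7_exists_c f hbd hArg
  set t : GaussianInt → ℂ :=
    fun p => ((Zsqrtd.norm p : ℂ) - 1) / ((Zsqrtd.norm p : ℂ) - f p) with ht
  -- basic estimates
  have hN2 : ∀ p : GaussianInt, FirstQuadPrime p → (2 : ℝ) ≤ (Zsqrtd.norm p : ℝ) := by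
    intro p hp; exact_mod_cast stmt7_norm_two_le hp
  have hcastC : ∀ p : GaussianInt, ((Zsqrtd.norm p : ℂ)) = (((Zsqrtd.norm p : ℝ)) : ℂ) := by
    intro p; push_cast; ring
  have hnum : ∀ p : GaussianInt, FirstQuadPrime p →
      ‖((Zsqrtd.norm p : ℂ) - 1)‖ = (Zsqrtd.norm p : ℝ) - 1 := by
    intro p hp
    have h2 := hN2 p hp
    have he : ((Zsqrtd.norm p : ℂ) - 1) = (((Zsqrtd.norm p : ℝ) - 1 : ℝ) : ℂ) := by
      push_cast; ring
    rw [he, Complex.norm_real, Real.norm_eq_abs, abs_of_nonneg (by linarith)]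
  have hden : ∀ p : GaussianInt, FirstQuadPrime p →
      (Zsqrtd.norm p : ℝ) - 1 ≤ ‖(Zsqrtd.norm p : ℂ) - f p‖ := by
    intro p hp
    have h2 := hN2 p hp
    have hf := hbd p hp.1.ne_zero
    have h3 : ‖(Zsqrtd.norm p : ℂ)‖ - ‖f p‖ ≤ ‖(Zsqrtd.norm p : ℂ) - f p‖ :=
      norm_sub_norm_le _ _
    have h4 : ‖(Zsqrtd.norm p : ℂ)‖ = (Zsqrtd.norm p : ℝ) := by
      rw [hcastC p, Complex.norm_real, Real.norm_eq_abs, abs_of_nonneg (by linarith)]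
    linarith
  have hdenpos : ∀ p : GaussianInt, FirstQuadPrime p →
      (0 : ℝ) < ‖(Zsqrtd.norm p : ℂ) - f p‖ := by
    intro p hp
    have := hden p hp
    have := hN2 p hp
    linarith
  have hden0 : ∀ p : GaussianInt, FirstQuadPrime p → ((Zsqrtd.norm p : ℂ) - f p) ≠ 0 := by
    intro p hp
    exact norm_pos_iff.1 (hdenpos p hp)
  have htne : ∀ p : GaussianInt, FirstQuadPrime p → t p ≠ 0 := by
    intro p hp
    have h2 := hN2 p hp
    apply div_ne_zero _ (hden0 p hp)
    intro h
    have := hnum p hp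
    rw [h, norm_zero] at this
    linarith
  have htle1 : ∀ p : GaussianInt, FirstQuadPrime p → ‖t p‖ ≤ 1 := by
    intro p hp
    rw [ht]
    simp only
    rw [norm_div, hnum p hp]
    rw [div_le_one (hdenpos p hp)]
    exact hden p hp
  have hreAbs : ∀ p : GaussianInt, FirstQuadPrime p →
      (Zsqrtd.norm p : ℝ) - (f p).re ≤ ‖(Zsqrtd.norm p : ℂ) - f p‖ := by
    intro p hp
    have h1 : ((Zsqrtd.norm p : ℂ) - f p).re = (Zsqrtd.norm p : ℝ) - (f p).re := by
      simp [Complex.sub_re]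
    have h2 := Complex.re_le_norm ((Zsqrtd.norm p : ℂ) - f p)
    linarith
  -- subtype and box finsets
  set B : ℕ → Finset {p : GaussianInt // FirstQuadPrime p} :=
    fun M => (P1box M).subtype _ with hB
  have hBmono : Monotone B := by
    intro a b hab q hq
    rw [hB, Finset.mem_subtype] at hq ⊢
    exact stmt7_P1box_mono hab hq
  have hBtop : Tendsto B atTop atTop := by
    apply tendsto_atTop_finset_of_monotone hBmono
    intro q
    refine ⟨(Zsqrtd.norm q.1).toNat, ?_⟩
    rw [hB, Finset.mem_subtype]
    exact stmt7_mem_P1box q.2 (Int.self_le_toNat _)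
  have hprodeq : ∀ M, ∏ p ∈ P1box M, t p = ∏ q ∈ B M, t q.1 := by
    intro M
    rw [hB]
    simp only
    rw [Finset.prod_subtype_eq_prod_filter]
    rw [Finset.filter_true_of_mem fun p hp => stmt7_mem_P1box_prime hp]
  have hnormle : ∀ M, ‖∏ p ∈ P1box M, t p‖ ≤ 1 := by
    intro M
    rw [norm_prod]
    exact Finset.prod_le_one (fun p _ => norm_nonneg _)
      (fun p hp => htle1 p (stmt7_mem_P1box_prime hp))
  by_cases hS : Summable fun p : {p : GaussianInt // FirstQuadPrime p} =>
      ‖1 - f p.1‖ / (Zsqrtd.norm p.1 : ℝ)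
  · -- convergent case
    have hlog_sum : Summable fun q : {p : GaussianInt // FirstQuadPrime p} =>
        Complex.log (t q.1) := by
      apply Summable.of_norm_bounded
        (g := fun q => (if Zsqrtd.norm q.1 ≤ 4 then ‖Complex.log (t q.1)‖ else 0) +
          3 * (‖1 - f q.1‖ / (Zsqrtd.norm q.1 : ℝ)))
      · apply Summable.add
        · apply summable_of_finite_support
          have hfin : ({q : {p : GaussianInt // FirstQuadPrime p} | q.1 ∈ P1box 4}).Finite := by
            apply Set.Finite.preimage (Set.injOn_of_injective Subtype.val_injective)
            exact (P1box 4).finite_toSet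
          apply hfin.subset
          intro q hq
          simp only [Function.mem_support] at hq
          by_cases h4 : Zsqrtd.norm q.1 ≤ 4
          · exact stmt7_mem_P1box q.2 (by exact_mod_cast h4)
          · simp [h4] at hq
        · exact hS.mul_left 3
      · intro q
        have hp := q.2
        have h2 := hN2 q.1 hp
        have hnn : 0 ≤ 3 * (‖1 - f q.1‖ / (Zsqrtd.norm q.1 : ℝ)) := by positivity
        by_cases h4 : Zsqrtd.norm q.1 ≤ 4
        · rw [if_pos h4]
          linarith
        · rw [if_neg h4, zero_add]
          have hN5 : (5 : ℝ) ≤ (Zsqrtd.norm q.1 : ℝ) := by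
            have : (5 : ℤ) ≤ Zsqrtd.norm q.1 := by omega
            exact_mod_cast this
          have hsub : ‖t q.1 - 1‖ ≤ ‖1 - f q.1‖ / ((Zsqrtd.norm q.1 : ℝ) - 1) := by
            have he : t q.1 - 1 = (f q.1 - 1) / ((Zsqrtd.norm q.1 : ℂ) - f q.1) := by
              rw [ht]; simp only
              rw [div_sub_one (hden0 q.1 hp)]
              congr 1
              ring
            rw [he, norm_div, norm_sub_rev]
            exact div_le_div_of_nonneg_left (norm_nonneg _) (by linarith) (hden q.1 hp)
          have hfle2 : ‖1 - f q.1‖ ≤ 2 := by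
            calc ‖(1 : ℂ) - f q.1‖ ≤ ‖(1:ℂ)‖ + ‖f q.1‖ := norm_sub_le _ _
            _ ≤ 2 := by rw [norm_one]; linarith [hbd q.1 hp.1.ne_zero]
          have hhalf : ‖t q.1 - 1‖ ≤ 1/2 := by
            apply hsub.trans
            rw [div_le_div_iff₀ (by linarith) (by norm_num)]
            linarith
          have hlb := Complex.norm_log_one_add_half_le_self hhalf
          rw [show (1 : ℂ) + (t q.1 - 1) = t q.1 by ring] at hlb
          apply hlb.trans
          apply (mul_le_mul_of_nonneg_left hsub (by norm_num : (0:ℝ) ≤ 3/2)).trans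
          have ha : (0:ℝ) ≤ ‖1 - f q.1‖ := norm_nonneg _
          have key : ‖1 - f q.1‖ / ((Zsqrtd.norm q.1 : ℝ) - 1) ≤
              2 * ‖1 - f q.1‖ / (Zsqrtd.norm q.1 : ℝ) := by
            rw [div_le_div_iff₀ (by linarith) (by linarith)]
            nlinarith
          calc (3:ℝ)/2 * (‖1 - f q.1‖ / ((Zsqrtd.norm q.1 : ℝ) - 1)) ≤
              3/2 * (2 * ‖1 - f q.1‖ / (Zsqrtd.norm q.1 : ℝ)) :=
            mul_le_mul_of_nonneg_left key (by norm_num)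
          _ = 3 * (‖1 - f q.1‖ / (Zsqrtd.norm q.1 : ℝ)) := by ring
    obtain ⟨S, hSsum⟩ := hlog_sum
    set L : ℂ := Complex.exp S with hL
    have hHP : HasProd (fun q : {p : GaussianInt // FirstQuadPrime p} => t q.1) L := by
      apply hSsum.cexp.congr_fun
      intro q
      exact (Complex.exp_log (htne q.1 q.2)).symm
    have hLne : L ≠ 0 := Complex.exp_ne_zero _
    have htendsto : Tendsto (fun M : ℕ => ∏ p ∈ P1box M, t p) atTop (nhds L) := by
      have h1 : Tendsto
          (fun s : Finset {p : GaussianInt // FirstQuadPrime p} => ∏ q ∈ s, t q.1)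
          atTop (nhds L) := hHP
      exact Tendsto.congr (fun M => (hprodeq M).symm) (h1.comp hBtop)
    refine ⟨L, htendsto, ?_, ?_⟩
    · exact le_of_tendsto htendsto.norm (Eventually.of_forall hnormle)
    · exact ⟨fun h => absurd h hLne, fun h => absurd hS h⟩
  · -- divergent case
    refine ⟨0, ?_, by norm_num, ⟨fun _ => hS, fun _ => rfl⟩⟩
    set y : {p : GaussianInt // FirstQuadPrime p} → ℝ :=
      fun q => c * (‖1 - f q.1‖ / (Zsqrtd.norm q.1 : ℝ)) with hy
    have hy0 : ∀ q, 0 ≤ y q := by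
      intro q
      have := hN2 q.1 q.2
      rw [hy]
      have hq0 : (0:ℝ) ≤ (Zsqrtd.norm q.1 : ℝ) := by linarith
      positivity
    have hyns : ¬ Summable y := by
      intro h
      apply hS
      have h2 := h.mul_left c⁻¹
      apply h2.congr
      intro q
      rw [hy]
      field_simp
    have hsum_top : Tendsto (fun M => ∑ q ∈ B M, y q) atTop atTop := by
      rw [tendsto_atTop]
      intro b
      obtain ⟨u, hu⟩ : ∃ u : Finset {p : GaussianInt // FirstQuadPrime p},
          b ≤ ∑ q ∈ u, y q := by
        by_contra h
        push_neg at h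
        exact hyns (summable_of_sum_le hy0 fun u => (h u).le)
      filter_upwards [hBtop.eventually (eventually_ge_atTop u)] with M hM
      calc b ≤ ∑ q ∈ u, y q := hu
      _ ≤ ∑ q ∈ B M, y q := Finset.sum_le_sum_of_subset_of_nonneg hM fun q _ _ => hy0 q
    have hbound : ∀ M, ‖∏ p ∈ P1box M, t p‖ ≤ (1 + ∑ q ∈ B M, y q)⁻¹ := by
      intro M
      rw [hprodeq M, norm_prod]
      have hterm : ∀ q ∈ B M, ‖t q.1‖ ≤ (1 + y q)⁻¹ := by
        intro q _
        have hp := q.2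
        have h2 := hN2 q.1 hp
        have hcb := hc2 q.1 hp
        have hre := hreAbs q.1 hp
        have hNne : (Zsqrtd.norm q.1 : ℝ) ≠ 0 := by linarith
        have hyq : y q * (Zsqrtd.norm q.1 : ℝ) = c * ‖1 - f q.1‖ := by
          rw [hy]
          simp only
          rw [mul_assoc, div_mul_cancel₀ _ hNne]
        rw [ht]
        simp only
        rw [norm_div, hnum q.1 hp, inv_eq_one_div,
          div_le_div_iff₀ (hdenpos q.1 hp) (by nlinarith [hy0 q])]
        have hyb : ((Zsqrtd.norm q.1 : ℝ) - 1) * y q ≤ c * ‖1 - f q.1‖ := by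
          nlinarith [hy0 q]
        nlinarith [hy0 q]
      calc ∏ q ∈ B M, ‖t q.1‖ ≤ ∏ q ∈ B M, (1 + y q)⁻¹ :=
            Finset.prod_le_prod (fun q _ => norm_nonneg _) hterm
      _ = (∏ q ∈ B M, (1 + y q))⁻¹ := by rw [← Finset.prod_inv_distrib]
      _ ≤ (1 + ∑ q ∈ B M, y q)⁻¹ := by
          apply inv_anti₀
          · have : 0 ≤ ∑ q ∈ B M, y q := Finset.sum_nonneg fun q _ => hy0 q
            linarith
          · exact stmt7_one_add_sum_le_prod _ _ fun q _ => hy0 q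
    apply squeeze_zero_norm hbound
    exact (tendsto_atTop_add_const_left _ 1 hsum_top).inv_tendsto_atTop
end
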